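/- arXiv:1309.2857 — 8 statements merged into one kernel-verified Lean document; each statement's English description precedes it below -/
import Mathlib

section
/- Let Q be a nonnegative (sub-Markov-type) bounded linear operator on B_1 satisfying QV ≤ δV + L·1_X with δ ∈ (0,1), L > 0. Then its adjoint Q' on the dual space B_1' satisfies the Doeblin–Fortet inequality ‖Q' f'‖_1 ≤ δ ‖f'‖_1 + L ‖f'‖_0 for all f' ∈ B_1', where ‖f'‖_0 := sup{|f'(f)| : f ∈ B_0, ‖f‖_0 ≤ 1} is the semi-norm induced by the bounded functions B_0 ⊂ B_1. -/
/-!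
Positivity of `Q` turns `|f| ≤ V` into `|Q f| ≤ Q V ≤ δ V + L`. Clamping `Q f` to `[-δ V, δ V]`
splits it as `g + h` with `|g| ≤ δ V` and `|h| ≤ L`, so `|f' (Q f)| ≤ |f' g| + |f' h| ≤ δ M + L m`.
-/

theorem Real.exists_abs_le_abs_sub_le_of_abs_le_add {t a b : ℝ} (ha : 0 ≤ a) (hb : 0 ≤ b)
    (h : |t| ≤ a + b) : ∃ s, |s| ≤ a ∧ |t - s| ≤ b := by
  obtain ⟨hlow, hupp⟩ := abs_le.mp h
  rcases le_or_gt t a with ht_le | ht_gt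
  · rcases le_or_gt (-a) t with ht_ge | ht_lt
    · exact ⟨t, abs_le.mpr ⟨ht_ge, ht_le⟩, by simpa using hb⟩
    · exact ⟨-a, by rw [abs_neg, abs_of_nonneg ha], abs_le.mpr ⟨by linarith, by linarith⟩⟩
  · exact ⟨a, (abs_of_nonneg ha).le, abs_le.mpr ⟨by linarith, by linarith⟩⟩

theorem abs_apply_le_apply_of_abs_le {X Y : Type*} {Q : (X → ℝ) →ₗ[ℝ] (Y → ℝ)}
    (hpos : ∀ f : X → ℝ, (∀ x, 0 ≤ f x) → ∀ y, 0 ≤ Q f y) {f V : X → ℝ}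
    (hf : ∀ x, |f x| ≤ V x) (y : Y) : |Q f y| ≤ Q V y := by
  have hsub : 0 ≤ Q (V - f) y := hpos _ (fun x => by simp [(abs_le.mp (hf x)).2]) y
  have hadd : 0 ≤ Q (V + f) y := hpos _ (fun x => by
    simp only [Pi.add_apply]; linarith [(abs_le.mp (hf x)).1]) y
  simp only [map_sub, map_add, Pi.sub_apply, Pi.add_apply] at hsub hadd
  exact abs_le.mpr ⟨by linarith, by linarith⟩

theorem LinearMap.abs_apply_le_mul_of_abs_le_mul {X : Type*} {φ : (X → ℝ) →ₗ[ℝ] ℝ}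
    {W : X → ℝ} {M : ℝ} (hM : ∀ f : X → ℝ, (∀ x, |f x| ≤ W x) → |φ f| ≤ M)
    {c : ℝ} (hc : 0 < c) {g : X → ℝ} (hg : ∀ x, |g x| ≤ c * W x) : |φ g| ≤ c * M := by
  have hscaled : |φ (c⁻¹ • g)| ≤ M := hM _ fun x => by
    rw [Pi.smul_apply, smul_eq_mul, abs_mul, abs_of_pos (inv_pos.mpr hc), inv_mul_le_iff₀ hc]
    exact hg x
  calc |φ g| = c * |φ (c⁻¹ • g)| := by
        rw [map_smul, smul_eq_mul, abs_mul, abs_of_pos (inv_pos.mpr hc), mul_inv_cancel_left₀ hc.ne']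
    _ ≤ c * M := mul_le_mul_of_nonneg_left hscaled hc.le

/- `‖f'‖₁` and `‖f'‖₀` are encoded by arbitrary upper bounds `M` and `m` of `|f' f|` over the unit
balls of `B₁` (`|f| ≤ V`) and of `B₀` (`|f| ≤ 1`). -/
theorem dual_doeblin_fortet_general
    (X : Type*)
    (V : X → ℝ)
    (Q : Module.End ℝ (X → ℝ))
    (hpos : ∀ f : X → ℝ, (∀ x, 0 ≤ f x) → ∀ x, 0 ≤ Q f x)
    (δ L : ℝ) (hδ0 : 0 < δ) (hL : 0 < L)
    (hdrift : ∀ x, Q V x ≤ δ * V x + L)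
    (f' : (X → ℝ) →ₗ[ℝ] ℝ) (M m : ℝ)
    (hM : ∀ f : X → ℝ, (∀ x, |f x| ≤ V x) → |f' f| ≤ M)
    (hm : ∀ f : X → ℝ, (∀ x, |f x| ≤ 1) → |f' f| ≤ m) :
    ∀ f : X → ℝ, (∀ x, |f x| ≤ V x) → |f' (Q f)| ≤ δ * M + L * m := by
  intro f hf
  have hδV : ∀ x, 0 ≤ δ * V x := fun x => mul_nonneg hδ0.le ((abs_nonneg _).trans (hf x))
  have hQf : ∀ x, |Q f x| ≤ δ * V x + L := fun x =>
    (abs_apply_le_apply_of_abs_le hpos hf x).trans (hdrift x)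
  choose g hg using fun x => Real.exists_abs_le_abs_sub_le_of_abs_le_add (hδV x) hL.le (hQf x)
  have hsmall : |f' g| ≤ δ * M := f'.abs_apply_le_mul_of_abs_le_mul hM hδ0 fun x => (hg x).1
  have hbounded : |f' (Q f - g)| ≤ L * m :=
    f'.abs_apply_le_mul_of_abs_le_mul (W := fun _ => 1) hm hL fun x => by simpa using (hg x).2
  calc |f' (Q f)| = |f' g + f' (Q f - g)| := by rw [← map_add, add_sub_cancel]
    _ ≤ |f' g| + |f' (Q f - g)| := abs_add_le _ _
    _ ≤ δ * M + L * m := add_le_add hsmall hbounded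

theorem dual_doeblin_fortet
    (X : Type*) [MeasurableSpace X]
    (V : X → ℝ) (hV : ∀ x, 1 ≤ V x)
    (Q : Module.End ℝ (X → ℝ))
    (hpos : ∀ f : X → ℝ, (∀ x, 0 ≤ f x) → ∀ x, 0 ≤ Q f x)
    (δ L : ℝ) (hδ0 : 0 < δ) (hδ1 : δ < 1) (hL : 0 < L)
    (hdrift : ∀ x, Q V x ≤ δ * V x + L)
    (f' : (X → ℝ) →ₗ[ℝ] ℝ) (M m : ℝ)
    (hM : ∀ f : X → ℝ, (∀ x, |f x| ≤ V x) → |f' f| ≤ M)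
    (hm : ∀ f : X → ℝ, (∀ x, |f x| ≤ 1) → |f' f| ≤ m) :
    ∀ f : X → ℝ, (∀ x, |f x| ≤ V x) → |f' (Q f)| ≤ δ * M + L * m :=
  dual_doeblin_fortet_general X V Q hpos δ L hδ0 hL hdrift f' M m hM hm
end

section
/- Assume the uniform weak drift condition: P and Q := P̂_k satisfy TV ≤ δV + L·1_X for T ∈ {P, Q} with δ ∈ (0,1), L > 0, and assume Q is V-geometrically ergodic with rate ρ_k ∈ (0,1) and constant C_k: ‖Q^n f − π̂_k(f)φ_k‖_1 ≤ C_k ρ_k^n ‖f‖_1, where π̂_k is a Q-invariant positive measure with π̂_k(V) < ∞ and Qφ_k = φ_k, π̂_k(φ_k) = 1, φ_k bounded nonnegative. Let π be P-invariant with π(V) < ∞. Then for every n ≥ 1, the total variation distance satisfies ‖π̂_k − π‖_TV ≤ π̂_k(1_X)·|1 − π(φ_k)| + (L/(1−δ))·(2C_k ρ_k^n + n·A·Δ_k), where Δ_k := ‖P̂_k − P‖_{0,1} and A := 1 + L/(1−δ). -/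
/-
Write `M := L / (1 - δ)`. Integrating the drift inequality `P V ≤ δ V + L` against the
`P`-invariant `π` gives `π V ≤ M`. Split
`πQ f − π f = πQ f · (1 − π φ) + π (πQ(f) φ − Qⁿ f) + (π (Qⁿ f) − π f)`.
The middle term is at most `C ρⁿ π V` by geometric ergodicity of `Q`. For the last one,
invariance of `π` gives `π (Q^{m+1} g) − π g = π ((Q − P) Qᵐ g) + (π (Qᵐ g) − π g)`, and `Qᵐ g`
stays in the unit ball since `Q` is positive and sub-Markov, so each of the `n` steps costs at
most `Δ π V`.
-/

theorem abs_map_le_of_abs_le {E F G : Type*} [AddCommGroup E] [Lattice E]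
    [IsOrderedAddMonoid E] [AddCommGroup F] [Lattice F] [IsOrderedAddMonoid F]
    [FunLike G E F] [AddMonoidHomClass G E F] (T : G) (hT : Monotone T) {h w : E}
    (hw : |h| ≤ w) : |T h| ≤ T w :=
  abs_le'.2 ⟨hT (abs_le'.1 hw).1, by rw [← map_neg]; exact hT (abs_le'.1 hw).2⟩

theorem abs_pow_apply_le_of_map_le {R E : Type*} [Semiring R] [AddCommGroup E] [Lattice E]
    [IsOrderedAddMonoid E] [Module R E] {Q : Module.End R E} (hQ : Monotone Q) {e : E}
    (hQe : Q e ≤ e) {g : E} (hg : |g| ≤ e) (m : ℕ) : |(Q ^ m) g| ≤ e := by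
  induction m with
  | zero => simpa using hg
  | succ m ih =>
    rw [pow_succ', Module.End.mul_apply]
    exact (abs_map_le_of_abs_le Q hQ ih).trans hQe

section Functionals

variable {X : Type*} {π : (X → ℝ) →ₗ[ℝ] ℝ} {P Q : Module.End ℝ (X → ℝ)} {V : X → ℝ}

theorem abs_apply_le_mul_apply (hπ : Monotone π) {h : X → ℝ} {c : ℝ}
    (hh : ∀ x, |h x| ≤ c * V x) : |π h| ≤ c * π V := by
  simpa using abs_map_le_of_abs_le π hπ (w := c • V) hh

theorem apply_le_div_of_drift (hπ : Monotone π) (hπ1 : π (fun _ => 1) = 1)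
    (hπP : ∀ f, π (P f) = π f) {δ L : ℝ} (hδ : δ < 1) (hdrift : ∀ x, P V x ≤ δ * V x + L) :
    π V ≤ L / (1 - δ) := by
  have h : π V ≤ δ * π V + L := by
    have hPV : P V ≤ δ • V + L • fun _ => 1 := fun x => by simpa using hdrift x
    simpa [← hπP V, hπ1] using hπ hPV
  rw [le_div_iff₀ (sub_pos.2 hδ)]
  linarith

theorem abs_map_pow_apply_sub_le (hπ : Monotone π) (hπP : ∀ f, π (P f) = π f) (hQ : Monotone Q)
    (hQ1 : ∀ x, Q (fun _ => 1) x ≤ 1) {Δ : ℝ}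
    (hΔ : ∀ g : X → ℝ, (∀ x, |g x| ≤ 1) → ∀ x, |(Q - P) g x| ≤ Δ * V x)
    {g : X → ℝ} (hg : ∀ x, |g x| ≤ 1) (m : ℕ) :
    |π ((Q ^ m) g) - π g| ≤ m * (Δ * π V) := by
  induction m with
  | zero => simp
  | succ m ih =>
    set h := (Q ^ m) g
    have hstep : π ((Q ^ (m + 1)) g) = π ((Q - P) h) + π h := by
      rw [pow_succ', Module.End.mul_apply, LinearMap.sub_apply, map_sub, hπP]; ring
    have hdiff : |π ((Q - P) h)| ≤ Δ * π V :=
      abs_apply_le_mul_apply hπ (hΔ h (abs_pow_apply_le_of_map_le hQ hQ1 hg m))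
    calc |π ((Q ^ (m + 1)) g) - π g| = |π ((Q - P) h) + (π h - π g)| := by
          rw [hstep, add_sub_assoc]
      _ ≤ Δ * π V + m * (Δ * π V) := (abs_add_le _ _).trans (add_le_add hdiff ih)
      _ = (m + 1 : ℕ) * (Δ * π V) := by push_cast; ring

end Functionals

theorem tv_bound_geometric_n_general
    (X : Type*)
    (V : X → ℝ) (hV : ∀ x, 1 ≤ V x)
    (P Q : Module.End ℝ (X → ℝ))
    (hQpos : ∀ f : X → ℝ, (∀ x, 0 ≤ f x) → ∀ x, 0 ≤ Q f x)
    (hQsub : ∀ x, Q (fun _ => (1 : ℝ)) x ≤ 1)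
    (δ L : ℝ) (hδ1 : δ < 1) (hL : 0 < L)
    (hPdrift : ∀ x, P V x ≤ δ * V x + L)
    -- invariant probability measure of P
    (π : (X → ℝ) →ₗ[ℝ] ℝ)
    (hπpos : ∀ f : X → ℝ, (∀ x, 0 ≤ f x) → 0 ≤ π f)
    (hπ1 : π (fun _ => (1 : ℝ)) = 1)
    (hπinv : ∀ f : X → ℝ, π (P f) = π f)
    -- invariant positive measure of Q and fixed function φ
    (πQ : (X → ℝ) →ₗ[ℝ] ℝ)
    (hπQpos : ∀ f : X → ℝ, (∀ x, 0 ≤ f x) → 0 ≤ πQ f)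
    (φ : X → ℝ)
    -- V-geometric ergodicity of Q with rate ρ and constant C
    (ρ C : ℝ) (hρ0 : 0 < ρ) (hC : 0 < C)
    (hgeo : ∀ (n : ℕ) (f : X → ℝ), (∀ x, |f x| ≤ V x) →
      ∀ x, |(Q ^ n) f x - πQ f * φ x| ≤ C * ρ ^ n * V x)
    -- Δ is an upper bound for ‖Q − P‖_{0,1}
    (Δ : ℝ)
    (hΔ : ∀ g : X → ℝ, (∀ x, |g x| ≤ 1) → ∀ x, |(Q - P) g x| ≤ Δ * V x) :
    ∀ n : ℕ, 1 ≤ n → ∀ f : X → ℝ, (∀ x, |f x| ≤ 1) →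
      |πQ f - π f| ≤
        πQ (fun _ => (1 : ℝ)) * |1 - π φ| +
          L / (1 - δ) * (2 * C * ρ ^ n + n * (1 + L / (1 - δ)) * Δ) := by
  intro n _ f hf
  obtain ⟨x₀⟩ : Nonempty X := by
    by_contra hX
    rw [not_nonempty_iff] at hX
    rw [Subsingleton.elim (fun _ : X => (1 : ℝ)) 0, map_zero] at hπ1
    exact zero_ne_one hπ1
  have hπ : Monotone π := (monotone_iff_map_nonneg π).2 hπpos
  set M := L / (1 - δ)
  have hM : 0 ≤ M := div_nonneg hL.le (sub_nonneg.2 hδ1.le)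
  have hπV : π V ≤ M := apply_le_div_of_drift hπ hπ1 hπinv hδ1 hPdrift
  have hΔ0 : 0 ≤ Δ :=
    nonneg_of_mul_nonneg_left (by simpa using hΔ 0 (by simp) x₀) (by linarith [hV x₀])
  have hπQf : |πQ f| ≤ πQ (fun _ => 1) :=
    abs_map_le_of_abs_le πQ ((monotone_iff_map_nonneg πQ).2 hπQpos) hf
  have hergodic : |πQ f * π φ - π ((Q ^ n) f)| ≤ C * ρ ^ n * π V := by
    simpa using abs_apply_le_mul_apply hπ (h := πQ f • φ - (Q ^ n) f) fun x => by
      simpa [abs_sub_comm] using hgeo n f (fun x => (hf x).trans (hV x)) x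
  have hperturb : |π ((Q ^ n) f) - π f| ≤ n * (Δ * π V) :=
    abs_map_pow_apply_sub_le hπ hπinv ((monotone_iff_map_nonneg Q).2 hQpos) hQsub hΔ hf n
  have hCρ : 0 ≤ C * ρ ^ n := by positivity
  calc |πQ f - π f|
      = |πQ f * (1 - π φ) + (πQ f * π φ - π ((Q ^ n) f)) + (π ((Q ^ n) f) - π f)| := by ring_nf
    _ ≤ |πQ f| * |1 - π φ| + C * ρ ^ n * π V + n * (Δ * π V) := by
      grw [abs_add_three, abs_mul, hergodic, hperturb]
    _ ≤ πQ (fun _ => 1) * |1 - π φ| + M * (2 * C * ρ ^ n + n * (1 + M) * Δ) := by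
      have hπV' : π V ≤ M * (1 + M) := by nlinarith
      nlinarith [mul_le_mul_of_nonneg_right hπQf (abs_nonneg (1 - π φ)),
        mul_le_mul_of_nonneg_left hπV hCρ, mul_nonneg hM hCρ,
        mul_le_mul_of_nonneg_left hπV' (mul_nonneg n.cast_nonneg hΔ0)]

theorem tv_bound_geometric_n
    (X : Type*) [MeasurableSpace X]
    (V : X → ℝ) (hV : ∀ x, 1 ≤ V x)
    (P Q : Module.End ℝ (X → ℝ))
    (hPpos : ∀ f : X → ℝ, (∀ x, 0 ≤ f x) → ∀ x, 0 ≤ P f x)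
    (hPmarkov : P (fun _ => (1 : ℝ)) = fun _ => (1 : ℝ))
    (hQpos : ∀ f : X → ℝ, (∀ x, 0 ≤ f x) → ∀ x, 0 ≤ Q f x)
    (hQsub : ∀ x, Q (fun _ => (1 : ℝ)) x ≤ 1)
    (δ L : ℝ) (hδ0 : 0 < δ) (hδ1 : δ < 1) (hL : 0 < L)
    (hPdrift : ∀ x, P V x ≤ δ * V x + L)
    (hQdrift : ∀ x, Q V x ≤ δ * V x + L)
    -- invariant probability measure of P
    (π : (X → ℝ) →ₗ[ℝ] ℝ)
    (hπpos : ∀ f : X → ℝ, (∀ x, 0 ≤ f x) → 0 ≤ π f)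
    (hπ1 : π (fun _ => (1 : ℝ)) = 1)
    (hπinv : ∀ f : X → ℝ, π (P f) = π f)
    -- invariant positive measure of Q and fixed function φ
    (πQ : (X → ℝ) →ₗ[ℝ] ℝ)
    (hπQpos : ∀ f : X → ℝ, (∀ x, 0 ≤ f x) → 0 ≤ πQ f)
    (hπQinv : ∀ f : X → ℝ, πQ (Q f) = πQ f)
    (φ : X → ℝ) (hφpos : ∀ x, 0 ≤ φ x) (hφbd : ∃ b : ℝ, ∀ x, φ x ≤ b)
    (hQφ : Q φ = φ) (hπQφ : πQ φ = 1)
    -- V-geometric ergodicity of Q with rate ρ and constant C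
    (ρ C : ℝ) (hρ0 : 0 < ρ) (hρ1 : ρ < 1) (hC : 0 < C)
    (hgeo : ∀ (n : ℕ) (f : X → ℝ), (∀ x, |f x| ≤ V x) →
      ∀ x, |(Q ^ n) f x - πQ f * φ x| ≤ C * ρ ^ n * V x)
    -- Δ is an upper bound for ‖Q − P‖_{0,1}
    (Δ : ℝ)
    (hΔ : ∀ g : X → ℝ, (∀ x, |g x| ≤ 1) → ∀ x, |(Q - P) g x| ≤ Δ * V x) :
    ∀ n : ℕ, 1 ≤ n → ∀ f : X → ℝ, (∀ x, |f x| ≤ 1) →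
      |πQ f - π f| ≤
        πQ (fun _ => (1 : ℝ)) * |1 - π φ| +
          L / (1 - δ) * (2 * C * ρ ^ n + n * (1 + L / (1 - δ)) * Δ) :=
  tv_bound_geometric_n_general X V hV P Q hQpos hQsub δ L hδ1 hL hPdrift π hπpos hπ1 hπinv πQ hπQpos
    φ ρ C hρ0 hC hgeo Δ hΔ
end

section
/- Under the hypotheses of the previous estimate, choosing n := max(0, ⌊ln Δ_k / ln ρ_k⌋) yields the explicit bound ‖π̂_k − π‖_TV ≤ π̂_k(1_X)·|1 − π(φ_k)| + (L/(1−δ))·(2C_k/ρ_k + A·|ln Δ_k|/ln(ρ_k^{−1}))·Δ_k, where A = 1 + L/(1−δ) and Δ_k = ‖P̂_k − P‖_{0,1}. -/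
/-!
Split `πQ f - π f = πQ f (1 - π φ) + (πQ f π φ - π (Qⁿ f)) + (π (Qⁿ f) - π f)`.
Geometric ergodicity of `Q` bounds the middle term by `C ρⁿ π V`. Since `π` is `P`-invariant,
the last term telescopes into `∑_{j<n} π ((P - Q) Qʲ f)`; a sub-Markov kernel keeps `Qʲ f` in
the unit ball, so each summand is at most `Δ π V`. The drift condition gives
`π V ≤ L / (1 - δ)`, and `n = ⌊log Δ / log ρ⌋₊` makes both `ρⁿ ≤ Δ / ρ` and
`n ≤ |log Δ| / log ρ⁻¹`.
-/

namespace LinearMap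

variable {R E F : Type*} [Semiring R]
  [AddCommGroup E] [Lattice E] [IsOrderedAddMonoid E] [Module R E]
  [AddCommGroup F] [Lattice F] [IsOrderedAddMonoid F] [Module R F]

theorem monotone_of_map_nonneg (T : E →ₗ[R] F) (hT : ∀ f, 0 ≤ f → 0 ≤ T f) : Monotone T :=
  (PositiveLinearMap.mk₀ T hT).monotone'

theorem abs_map_le_of_abs_le (T : E →ₗ[R] F) (hT : ∀ f, 0 ≤ f → 0 ≤ T f) {g h : E}
    (hgh : |g| ≤ h) : |T g| ≤ T h := by
  rw [abs_le'] at hgh ⊢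
  rw [← map_neg]
  exact ⟨monotone_of_map_nonneg T hT hgh.1, monotone_of_map_nonneg T hT hgh.2⟩

end LinearMap

theorem LinearMap.sub_map_pow_eq_sum {R M N : Type*} [Ring R] [AddCommGroup M] [Module R M]
    [AddCommGroup N] [Module R N] (π : M →ₗ[R] N) {P : Module.End R M} (hπP : ∀ f, π (P f) = π f)
    (Q : Module.End R M) (f : M) (n : ℕ) :
    π f - π ((Q ^ n) f) = ∑ j ∈ Finset.range n, π ((P - Q) ((Q ^ j) f)) := by
  induction n with
  | zero => simp
  | succ n ih =>
    rw [Finset.sum_range_succ, ← ih, pow_succ', Module.End.mul_apply, sub_apply, map_sub, hπP]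
    abel

theorem exists_pow_succ_le_and_le_log_div_log {ρ Δ : ℝ} (hρ0 : 0 < ρ) (hρ1 : ρ < 1)
    (hΔ0 : 0 < Δ) (hΔ1 : Δ ≤ 1) :
    ∃ n : ℕ, ρ ^ (n + 1) ≤ Δ ∧ (n : ℝ) ≤ |Real.log Δ| / Real.log ρ⁻¹ := by
  have hlogΔ : Real.log Δ ≤ 0 := Real.log_nonpos hΔ0.le hΔ1
  have hlogρ : Real.log ρ < 0 := Real.log_neg hρ0 hρ1
  rw [Real.log_inv, abs_of_nonpos hlogΔ, neg_div_neg_eq]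
  set r := Real.log Δ / Real.log ρ
  refine ⟨⌊r⌋₊, ?_, Nat.floor_le (div_nonneg_of_nonpos hlogΔ hlogρ.le)⟩
  have hlt : r < ⌊r⌋₊ + 1 := Nat.lt_floor_add_one r
  rw [div_lt_iff_of_neg hlogρ] at hlt
  rw [← Real.log_le_log_iff (by positivity) hΔ0, Real.log_pow]
  push_cast
  linarith

section MarkovKernel

variable {X : Type*}

theorem abs_pow_apply_le_one {Q : Module.End ℝ (X → ℝ)} (hQpos : ∀ f, 0 ≤ f → 0 ≤ Q f)
    (hQsub : Q 1 ≤ 1) {f : X → ℝ} (hf : |f| ≤ 1) (n : ℕ) : |(Q ^ n) f| ≤ 1 := by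
  induction n with
  | zero => simpa using hf
  | succ n ih =>
    rw [pow_succ', Module.End.mul_apply]
    exact (Q.abs_map_le_of_abs_le hQpos ih).trans hQsub

variable {P Q : Module.End ℝ (X → ℝ)} {π : (X → ℝ) →ₗ[ℝ] ℝ}

theorem apply_le_div_of_drift_s5 (hπpos : ∀ f, 0 ≤ f → 0 ≤ π f) (hπ1 : π 1 = 1)
    (hπinv : ∀ f, π (P f) = π f) {V : X → ℝ} {δ L : ℝ} (hδ1 : δ < 1)
    (hPdrift : ∀ x, P V x ≤ δ * V x + L) : π V ≤ L / (1 - δ) := by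
  have hdrift : π (P V) ≤ π (δ • V + L • 1) :=
    π.monotone_of_map_nonneg hπpos fun x => by simpa using hPdrift x
  rw [hπinv, map_add, map_smul, map_smul, hπ1, smul_eq_mul, smul_eq_mul, mul_one] at hdrift
  rw [le_div_iff₀ (sub_pos.2 hδ1)]
  linarith

theorem abs_sub_apply_pow_le (hπpos : ∀ f, 0 ≤ f → 0 ≤ π f) (hπinv : ∀ f, π (P f) = π f)
    (hQpos : ∀ f, 0 ≤ f → 0 ≤ Q f) (hQsub : Q 1 ≤ 1) {V : X → ℝ} {Δ : ℝ}
    (hΔ : ∀ g, |g| ≤ 1 → |(Q - P) g| ≤ Δ • V)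
    {f : X → ℝ} (hf : |f| ≤ 1) (n : ℕ) : |π f - π ((Q ^ n) f)| ≤ n * (Δ * π V) := by
  have hterm (j : ℕ) : |π ((P - Q) ((Q ^ j) f))| ≤ Δ * π V := by
    rw [← smul_eq_mul, ← map_smul]
    refine π.abs_map_le_of_abs_le hπpos ?_
    rw [← neg_sub Q P, LinearMap.neg_apply, abs_neg]
    exact hΔ _ (abs_pow_apply_le_one hQpos hQsub hf j)
  rw [π.sub_map_pow_eq_sum hπinv]
  calc _ ≤ ∑ j ∈ Finset.range n, |π ((P - Q) ((Q ^ j) f))| := Finset.abs_sum_le_sum_abs _ _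
    _ ≤ ∑ _j ∈ Finset.range n, Δ * π V := Finset.sum_le_sum fun j _ => hterm j
    _ = n * (Δ * π V) := by simp

theorem abs_sub_le_of_geometric_bound (hπpos : ∀ f, 0 ≤ f → 0 ≤ π f)
    (hπinv : ∀ f, π (P f) = π f) (hQpos : ∀ f, 0 ≤ f → 0 ≤ Q f) (hQsub : Q 1 ≤ 1)
    {πQ : (X → ℝ) →ₗ[ℝ] ℝ} (hπQpos : ∀ f, 0 ≤ f → 0 ≤ πQ f) {V φ : X → ℝ} {C ρ Δ : ℝ}
    (hΔ : ∀ g, |g| ≤ 1 → |(Q - P) g| ≤ Δ • V)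
    {f : X → ℝ} (hf : |f| ≤ 1) (n : ℕ)
    (hgeo : |(Q ^ n) f - πQ f • φ| ≤ (C * ρ ^ n) • V) :
    |πQ f - π f| ≤ πQ 1 * |1 - π φ| + (C * ρ ^ n + n * Δ) * π V := by
  have hπQf : |πQ f| ≤ πQ 1 := πQ.abs_map_le_of_abs_le hπQpos hf
  have hmixing : |πQ f * π φ - π ((Q ^ n) f)| ≤ C * ρ ^ n * π V := by
    rw [abs_sub_comm, ← smul_eq_mul (πQ f), ← map_smul, ← map_sub, ← smul_eq_mul, ← map_smul]
    exact π.abs_map_le_of_abs_le hπpos hgeo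
  have hperturb : |π ((Q ^ n) f) - π f| ≤ n * (Δ * π V) := by
    rw [abs_sub_comm]
    exact abs_sub_apply_pow_le hπpos hπinv hQpos hQsub hΔ hf n
  calc |πQ f - π f|
      = |πQ f * (1 - π φ) + (πQ f * π φ - π ((Q ^ n) f)) + (π ((Q ^ n) f) - π f)| := by ring_nf
    _ ≤ |πQ f| * |1 - π φ| + C * ρ ^ n * π V + n * (Δ * π V) := by
      rw [← abs_mul]
      exact (abs_add_three _ _ _).trans (add_le_add_three le_rfl hmixing hperturb)
    _ ≤ πQ 1 * |1 - π φ| + C * ρ ^ n * π V + n * (Δ * π V) := by gcongr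
    _ = πQ 1 * |1 - π φ| + (C * ρ ^ n + n * Δ) * π V := by ring

end MarkovKernel

theorem tv_bound_log_explicit_general
    (X : Type*)
    (V : X → ℝ) (hV : ∀ x, 1 ≤ V x)
    (P Q : Module.End ℝ (X → ℝ))
    (hQpos : ∀ f : X → ℝ, (∀ x, 0 ≤ f x) → ∀ x, 0 ≤ Q f x)
    (hQsub : ∀ x, Q (fun _ => (1 : ℝ)) x ≤ 1)
    (δ L : ℝ) (hδ1 : δ < 1) (hL : 0 < L)
    (hPdrift : ∀ x, P V x ≤ δ * V x + L)
    (π : (X → ℝ) →ₗ[ℝ] ℝ)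
    (hπpos : ∀ f : X → ℝ, (∀ x, 0 ≤ f x) → 0 ≤ π f)
    (hπ1 : π (fun _ => (1 : ℝ)) = 1)
    (hπinv : ∀ f : X → ℝ, π (P f) = π f)
    (πQ : (X → ℝ) →ₗ[ℝ] ℝ)
    (hπQpos : ∀ f : X → ℝ, (∀ x, 0 ≤ f x) → 0 ≤ πQ f)
    (φ : X → ℝ)
    (ρ C : ℝ) (hρ0 : 0 < ρ) (hρ1 : ρ < 1) (hC : 0 < C)
    (hgeo : ∀ (n : ℕ) (f : X → ℝ), (∀ x, |f x| ≤ V x) →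
      ∀ x, |(Q ^ n) f x - πQ f * φ x| ≤ C * ρ ^ n * V x)
    -- Δ is an upper bound for ‖Q − P‖_{0,1}, with 0 < Δ ≤ 1
    (Δ : ℝ) (hΔ0 : 0 < Δ) (hΔ1 : Δ ≤ 1)
    (hΔ : ∀ g : X → ℝ, (∀ x, |g x| ≤ 1) → ∀ x, |(Q - P) g x| ≤ Δ * V x) :
    ∀ f : X → ℝ, (∀ x, |f x| ≤ 1) →
      |πQ f - π f| ≤
        πQ (fun _ => (1 : ℝ)) * |1 - π φ| +
          L / (1 - δ) *
            (2 * C / ρ + (1 + L / (1 - δ)) * |Real.log Δ| / Real.log ρ⁻¹) * Δ := by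
  intro f hf
  set K := L / (1 - δ)
  have hK : 0 ≤ K := div_nonneg hL.le (sub_pos.2 hδ1).le
  have hπV : π V ≤ K := apply_le_div_of_drift_s5 hπpos hπ1 hπinv hδ1 hPdrift
  obtain ⟨n, hρn, hn⟩ := exists_pow_succ_le_and_le_log_div_log hρ0 hρ1 hΔ0 hΔ1
  have hmixing : C * ρ ^ n ≤ 2 * C / ρ * Δ := by
    have : ρ ^ n ≤ Δ / ρ := by rwa [le_div_iff₀ hρ0, ← pow_succ]
    calc C * ρ ^ n ≤ C * (Δ / ρ) := by gcongr
      _ = C / ρ * Δ := by ring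
      _ ≤ 2 * C / ρ * Δ := by gcongr; linarith
  have hperturb : n * Δ ≤ (1 + K) * |Real.log Δ| / Real.log ρ⁻¹ * Δ := by
    rw [mul_div_assoc]
    gcongr
    exact hn.trans (le_mul_of_one_le_left (hn.trans' n.cast_nonneg) (by linarith))
  calc |πQ f - π f|
      ≤ πQ (fun _ => 1) * |1 - π φ| + (C * ρ ^ n + n * Δ) * π V :=
        abs_sub_le_of_geometric_bound hπpos hπinv hQpos hQsub hπQpos hΔ hf n
          (hgeo n f fun x => (hf x).trans (hV x))
    _ ≤ πQ (fun _ => 1) * |1 - π φ| + (C * ρ ^ n + n * Δ) * K := by gcongr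
    _ ≤ πQ (fun _ => 1) * |1 - π φ|
          + (2 * C / ρ * Δ + (1 + K) * |Real.log Δ| / Real.log ρ⁻¹ * Δ) * K := by
        gcongr
    _ = _ := by ring

theorem tv_bound_log_explicit
    (X : Type*) [MeasurableSpace X]
    (V : X → ℝ) (hV : ∀ x, 1 ≤ V x)
    (P Q : Module.End ℝ (X → ℝ))
    (hPpos : ∀ f : X → ℝ, (∀ x, 0 ≤ f x) → ∀ x, 0 ≤ P f x)
    (hPmarkov : P (fun _ => (1 : ℝ)) = fun _ => (1 : ℝ))
    (hQpos : ∀ f : X → ℝ, (∀ x, 0 ≤ f x) → ∀ x, 0 ≤ Q f x)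
    (hQsub : ∀ x, Q (fun _ => (1 : ℝ)) x ≤ 1)
    (δ L : ℝ) (hδ0 : 0 < δ) (hδ1 : δ < 1) (hL : 0 < L)
    (hPdrift : ∀ x, P V x ≤ δ * V x + L)
    (hQdrift : ∀ x, Q V x ≤ δ * V x + L)
    (π : (X → ℝ) →ₗ[ℝ] ℝ)
    (hπpos : ∀ f : X → ℝ, (∀ x, 0 ≤ f x) → 0 ≤ π f)
    (hπ1 : π (fun _ => (1 : ℝ)) = 1)
    (hπinv : ∀ f : X → ℝ, π (P f) = π f)
    (πQ : (X → ℝ) →ₗ[ℝ] ℝ)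
    (hπQpos : ∀ f : X → ℝ, (∀ x, 0 ≤ f x) → 0 ≤ πQ f)
    (hπQinv : ∀ f : X → ℝ, πQ (Q f) = πQ f)
    (φ : X → ℝ) (hφpos : ∀ x, 0 ≤ φ x) (hφbd : ∃ b : ℝ, ∀ x, φ x ≤ b)
    (hQφ : Q φ = φ) (hπQφ : πQ φ = 1)
    (ρ C : ℝ) (hρ0 : 0 < ρ) (hρ1 : ρ < 1) (hC : 0 < C)
    (hgeo : ∀ (n : ℕ) (f : X → ℝ), (∀ x, |f x| ≤ V x) →
      ∀ x, |(Q ^ n) f x - πQ f * φ x| ≤ C * ρ ^ n * V x)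
    -- Δ is an upper bound for ‖Q − P‖_{0,1}, with 0 < Δ ≤ 1
    (Δ : ℝ) (hΔ0 : 0 < Δ) (hΔ1 : Δ ≤ 1)
    (hΔ : ∀ g : X → ℝ, (∀ x, |g x| ≤ 1) → ∀ x, |(Q - P) g x| ≤ Δ * V x) :
    ∀ f : X → ℝ, (∀ x, |f x| ≤ 1) →
      |πQ f - π f| ≤
        πQ (fun _ => (1 : ℝ)) * |1 - π φ| +
          L / (1 - δ) *
            (2 * C / ρ + (1 + L / (1 - δ)) * |Real.log Δ| / Real.log ρ⁻¹) * Δ :=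
  tv_bound_log_explicit_general X V hV P Q hQpos hQsub δ L hδ1 hL hPdrift π hπpos hπ1 hπinv πQ
    hπQpos φ ρ C hρ0 hρ1 hC hgeo Δ hΔ0 hΔ1 hΔ
end

section
/- Let P be a Markov kernel satisfying the drift condition PV ≤ δV + L·1_S for a set S and δ ∈ (0,1), L > 0, and the minorization condition P(x, A) ≥ ν(1_A)·1_S(x) for all x ∈ X, A ∈ 𝒳, where ν is a positive measure. Then ν(V) < ∞, and the nonnegative operator R := P − T, where Tf := ν(f)·1_S, has spectral radius r(R) on B_1 satisfying r(R) ≤ (δ·ν(1_X) + τ)/(ν(1_X) + τ) < 1, where τ := max(0, L − ν(V)). Consequently P is quasi-compact on B_1 with essential spectral radius r_ess(P) ≤ (δ·ν(1_X) + τ)/(ν(1_X) + τ). -/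
/-!
By the minorization, `R = P - ν(·) 1_S` is a positive operator, and the drift condition gives
`R U ≤ β U` for the shifted Lyapunov function `U = V + a`, where `a = τ / ν(1)` and
`β = (δ + a) / (1 + a) = (δ ν(1) + τ) / (ν(1) + τ)`. Since `V ≤ U ≤ (1 + a) V`, positivity of `R`
turns `R^n U ≤ β^n U` into `‖R^n‖ ≤ (1 + a) β^n` on `B₁`, so `r(R) ≤ β`. As `P - R` has rank one,
`P^n - R^n` is compact, hence the essential norm of `P^n` is at most `‖R^n‖` and `r_ess(P) ≤ β`.
-/

open Filter
open scoped ENNReal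

/-- The essential spectral radius of a bounded operator `T`:
`r_ess(T) = lim_n (inf{‖T^n − K‖ : K compact})^{1/n}` (taken as a `limsup`). -/
noncomputable def essRadius {E : Type*} [NormedAddCommGroup E] [NormedSpace ℝ E]
    (T : E →L[ℝ] E) : ℝ :=
  Filter.limsup
    (fun n : ℕ =>
      (sInf {r : ℝ | ∃ K : E →L[ℝ] E, IsCompactOperator K ∧ ‖T ^ n - K‖ = r}) ^ ((n : ℝ)⁻¹))
    Filter.atTop

/-- The spectral radius of a bounded operator, via Gelfand's formula (as a `limsup`). -/
noncomputable def specRadius {E : Type*} [NormedAddCommGroup E] [NormedSpace ℝ E]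
    (T : E →L[ℝ] E) : ℝ :=
  Filter.limsup (fun n : ℕ => ‖T ^ n‖ ^ ((n : ℝ)⁻¹)) Filter.atTop

open Topology
open scoped lp

lemma limsup_rpow_inv_le_of_le_mul_pow {f : ℕ → ℝ} {C β : ℝ} (hC : 0 < C) (hβ : 0 ≤ β)
    (hf0 : ∀ n, 0 ≤ f n) (hf : ∀ n, f n ≤ C * β ^ n) :
    limsup (fun n : ℕ => f n ^ (n : ℝ)⁻¹) atTop ≤ β := by
  have hlim : Tendsto (fun n : ℕ => C ^ (n : ℝ)⁻¹ * β) atTop (𝓝 β) := by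
    have := tendsto_const_nhds.rpow tendsto_inv_atTop_nhds_zero_nat (.inl hC.ne')
    simpa using this.mul_const β
  have hle : ∀ᶠ n : ℕ in atTop, f n ^ (n : ℝ)⁻¹ ≤ C ^ (n : ℝ)⁻¹ * β := by
    filter_upwards [eventually_ne_atTop 0] with n hn
    calc f n ^ (n : ℝ)⁻¹ ≤ (C * β ^ n) ^ (n : ℝ)⁻¹ :=
          Real.rpow_le_rpow (hf0 n) (hf n) (by positivity)
      _ = C ^ (n : ℝ)⁻¹ * β := by
          rw [Real.mul_rpow hC.le (by positivity), Real.pow_rpow_inv_natCast hβ hn]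
  calc limsup (fun n : ℕ => f n ^ (n : ℝ)⁻¹) atTop
      ≤ limsup (fun n : ℕ => C ^ (n : ℝ)⁻¹ * β) atTop :=
        limsup_le_limsup hle (isCoboundedUnder_le_of_le atTop fun n => Real.rpow_nonneg (hf0 n) _)
          hlim.isBoundedUnder_le
    _ = β := hlim.limsup_eq

section Operators

variable {E : Type*} [NormedAddCommGroup E] [NormedSpace ℝ E]

lemma specRadius_le_of_norm_pow_le {T : E →L[ℝ] E} {C β : ℝ} (hC : 0 < C) (hβ : 0 ≤ β)
    (hT : ∀ n, ‖T ^ n‖ ≤ C * β ^ n) : specRadius T ≤ β :=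
  limsup_rpow_inv_le_of_le_mul_pow hC hβ (fun _ => norm_nonneg _) hT

lemma IsCompactOperator.pow_sub_pow {A B : E →L[ℝ] E} (hAB : IsCompactOperator (A - B))
    (n : ℕ) : IsCompactOperator (A ^ n - B ^ n) := by
  induction n with
  | zero => simpa using isCompactOperator_zero
  | succ n ih =>
    have hsplit : A ^ (n + 1) - B ^ (n + 1) = A * (A ^ n - B ^ n) + (A - B) * B ^ n := by
      rw [pow_succ', pow_succ', mul_sub, sub_mul]
      abel
    rw [hsplit, FunLike.coe_add]
    exact (ih.clm_comp A).add (hAB.comp_clm (B ^ n))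

lemma essRadius_le_of_norm_pow_le {A B : E →L[ℝ] E} (hAB : IsCompactOperator (A - B))
    {C β : ℝ} (hC : 0 < C) (hβ : 0 ≤ β) (hB : ∀ n, ‖B ^ n‖ ≤ C * β ^ n) : essRadius A ≤ β := by
  have hnonneg : ∀ n : ℕ, ∀ r ∈ {r : ℝ | ∃ K : E →L[ℝ] E, IsCompactOperator K ∧ ‖A ^ n - K‖ = r},
      0 ≤ r := by
    rintro n _ ⟨K, -, rfl⟩
    exact norm_nonneg _
  refine limsup_rpow_inv_le_of_le_mul_pow hC hβ (fun n => Real.sInf_nonneg (hnonneg n))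
    fun n => (csInf_le ⟨0, hnonneg n⟩ ⟨A ^ n - B ^ n, hAB.pow_sub_pow n, ?_⟩).trans (hB n)
  rw [sub_sub_cancel]

lemma ContinuousLinearMap.isCompactOperator_of_forall_mem {F : Type*} [NormedAddCommGroup F]
    [NormedSpace ℝ F] (T : E →L[ℝ] F) (F' : Submodule ℝ F) [FiniteDimensional ℝ F']
    (hT : ∀ x, T x ∈ F') : IsCompactOperator T :=
  (isCompactOperator_of_locallyCompactSpace_dom (T.codRestrict F' hT)).clm_comp F'.subtypeL

end Operators

lemma abs_map_le_map_abs {E F G : Type*} [AddCommGroup E] [Lattice E] [IsOrderedAddMonoid E]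
    [AddCommGroup F] [Lattice F] [IsOrderedAddMonoid F] [FunLike G E F] [AddMonoidHomClass G E F]
    {f : G} (hf : Monotone f) (a : E) : |f a| ≤ f |a| :=
  abs_le'.2 ⟨hf (le_abs_self a), by simpa using hf (neg_le_abs a)⟩

namespace Module.End

variable {E : Type*} [AddCommGroup E] [PartialOrder E] [Module ℝ E] {R : Module.End ℝ E}

lemma monotone_pow (hR : Monotone R) (n : ℕ) : Monotone (R ^ n) := by
  rw [coe_pow]
  exact hR.iterate n

lemma pow_apply_le_pow_smul [PosSMulMono ℝ E] (hR : Monotone R) {U : E} {b : ℝ} (hb : 0 ≤ b)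
    (hRU : R U ≤ b • U) (n : ℕ) : (R ^ n) U ≤ b ^ n • U := by
  induction n with
  | zero => simp
  | succ n ih =>
    calc (R ^ (n + 1)) U = (R ^ n) (R U) := by rw [pow_succ, mul_apply]
      _ ≤ (R ^ n) (b • U) := monotone_pow hR n hRU
      _ = b • (R ^ n) U := map_smul _ _ _
      _ ≤ b • b ^ n • U := smul_le_smul_of_nonneg_left ih hb
      _ = b ^ (n + 1) • U := by rw [smul_smul, pow_succ']

end Module.End

section Weighted

variable {X : Type*}

/-- `T` is the operator `R` on the weighted space `{f : sup |f| / V < ∞}`, transported to `ℓ^∞`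
by the isometry `f ↦ f / V`. -/
def IsWeightedRep (V : X → ℝ) (T : ℓ^∞(X, ℝ) →L[ℝ] ℓ^∞(X, ℝ)) (R : Module.End ℝ (X → ℝ)) :
    Prop :=
  ∀ g x, T g x = R (fun y => g y * V y) x / V x

namespace IsWeightedRep

variable {V : X → ℝ} {T T' : ℓ^∞(X, ℝ) →L[ℝ] ℓ^∞(X, ℝ)} {R R' : Module.End ℝ (X → ℝ)}

lemma sub (hT : IsWeightedRep V T R) (hT' : IsWeightedRep V T' R') :
    IsWeightedRep V (T - T') (R - R') := fun g x => by
  simp [hT g x, hT' g x, sub_div]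

lemma pow (hV : ∀ x, V x ≠ 0) (hT : IsWeightedRep V T R) (n : ℕ) :
    IsWeightedRep V (T ^ n) (R ^ n) := by
  induction n with
  | zero => intro g x; simp [hV x]
  | succ n ih =>
    intro g x
    have hTg : (fun y => T g y * V y) = R (fun y => g y * V y) :=
      funext fun y => by rw [hT, div_mul_cancel₀ _ (hV y)]
    rw [pow_succ, mul_apply_eq_comp, ih, hTg, pow_succ, Module.End.mul_apply]

lemma opNorm_le (hV : ∀ x, 0 < V x) (hR : Monotone R) (hT : IsWeightedRep V T R) {U : X → ℝ}
    {b C : ℝ} (hb : 0 ≤ b) (hC : 0 ≤ C) (hVU : V ≤ U) (hUV : U ≤ C • V) (hRU : R U ≤ b • U) :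
    ‖T‖ ≤ C * b := by
  refine T.opNorm_le_bound (by positivity) fun g => lp.norm_le_of_forall_le (by positivity) ?_
  intro x
  have hgV : |fun y => g y * V y| ≤ ‖g‖ • U := fun y => by
    have hgy : |g y| ≤ ‖g‖ := by simpa using lp.norm_apply_le_norm ENNReal.top_ne_zero g y
    calc |g y * V y| = |g y| * V y := by rw [abs_mul, abs_of_pos (hV y)]
      _ ≤ ‖g‖ * U y := mul_le_mul hgy (hVU y) (hV y).le (norm_nonneg g)
  have hRgV : |R (fun y => g y * V y) x| ≤ ‖g‖ * (b * (C * V x)) :=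
    calc |R (fun y => g y * V y) x| ≤ R (‖g‖ • U) x := (abs_map_le_map_abs hR _).trans (hR hgV) x
      _ = ‖g‖ * R U x := by simp
      _ ≤ ‖g‖ * (b * (C * V x)) := by
        gcongr
        exact (hRU x).trans (mul_le_mul_of_nonneg_left (hUV x) hb)
  rw [hT g x, Real.norm_eq_abs, abs_div, abs_of_pos (hV x), div_le_iff₀ (hV x)]
  linarith

lemma norm_pow_le (hV : ∀ x, 0 < V x) (hR : Monotone R) (hT : IsWeightedRep V T R)
    {U : X → ℝ} {b C : ℝ} (hb : 0 ≤ b) (hC : 0 ≤ C) (hVU : V ≤ U) (hUV : U ≤ C • V)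
    (hRU : R U ≤ b • U) (n : ℕ) : ‖T ^ n‖ ≤ C * b ^ n :=
  (hT.pow (fun x => (hV x).ne') n).opNorm_le hV (Module.End.monotone_pow hR n) (pow_nonneg hb n)
    hC hVU hUV (Module.End.pow_apply_le_pow_smul hR hb hRU n)

lemma isCompactOperator_of_smulRight {w : X → ℝ} (hw : Memℓp (fun x => w x / V x) ∞)
    {φ : (X → ℝ) →ₗ[ℝ] ℝ} (hT : IsWeightedRep V T (φ.smulRight w)) : IsCompactOperator T := by
  let u : ℓ^∞(X, ℝ) := ⟨_, hw⟩
  refine T.isCompactOperator_of_forall_mem (ℝ ∙ u) fun g =>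
    Submodule.mem_span_singleton.2 ⟨φ (fun y => g y * V y), lp.ext (funext fun x => ?_)⟩
  simp [u, hT g x, mul_div_assoc]

end IsWeightedRep

end Weighted

lemma mul_add_le_div_mul_add {δ a v : ℝ} (hδ : δ ≤ 1) (ha : 0 ≤ a) (hv : 1 ≤ v) :
    δ * v + a ≤ (δ + a) / (1 + a) * (v + a) := by
  -- the difference is `a (1 - δ) (v - 1) / (1 + a)`
  rw [div_mul_eq_mul_div, le_div_iff₀ (by positivity)]
  nlinarith [mul_nonneg (mul_nonneg ha (sub_nonneg.2 hδ)) (sub_nonneg.2 hv)]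

lemma drift_residual_le {X : Type*} {V w : X → ℝ} {P : Module.End ℝ (X → ℝ)}
    {ν : (X → ℝ) →ₗ[ℝ] ℝ} {δ L a : ℝ} (hV : ∀ x, 1 ≤ V x) (hw : 0 ≤ w) (hP1 : P 1 = 1)
    (hdrift : ∀ x, P V x ≤ δ * V x + L * w x) (hδ : δ ≤ 1) (ha : 0 ≤ a)
    (haL : L - ν V ≤ a * ν 1) :
    (P - ν.smulRight w) (V + a • 1) ≤ ((δ + a) / (1 + a)) • (V + a • 1) := by
  intro x
  have hres : (P - ν.smulRight w) (V + a • 1) x ≤ δ * V x + a := by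
    simp only [LinearMap.sub_apply, LinearMap.smulRight_apply, map_add, map_smul, hP1,
      Pi.sub_apply, Pi.add_apply, Pi.smul_apply, smul_eq_mul, Pi.one_apply]
    nlinarith [hdrift x, mul_le_mul_of_nonneg_right haL (hw x)]
  calc _ ≤ δ * V x + a := hres
    _ ≤ (δ + a) / (1 + a) * (V x + a) := mul_add_le_div_mul_add hδ ha (hV x)
    _ = _ := by simp

lemma memℓp_infty_indicator_div {X : Type*} {V : X → ℝ} (hV : ∀ x, 1 ≤ V x) (S : Set X) :
    Memℓp (fun x => S.indicator 1 x / V x) ∞ := by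
  refine memℓp_infty ⟨1, ?_⟩
  rintro _ ⟨x, rfl⟩
  have hV0 : 0 < V x := one_pos.trans_le (hV x)
  dsimp only
  rw [Real.norm_eq_abs, abs_div, abs_of_pos hV0, div_le_one hV0]
  by_cases hx : x ∈ S <;> simp [hx, hV x, zero_le_one.trans (hV x)]

theorem drift_minorization_ess_radius_general
    (X : Type*)
    (V : X → ℝ) (hV : ∀ x, 1 ≤ V x)
    (P : Module.End ℝ (X → ℝ))
    (hmarkov : P (fun _ => (1 : ℝ)) = fun _ => (1 : ℝ))
    (S : Set X)
    (δ L : ℝ) (hδ0 : 0 < δ) (hδ1 : δ < 1)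
    (hdrift : ∀ x, P V x ≤ δ * V x + L * S.indicator (fun _ => (1 : ℝ)) x)
    -- ν : a positive measure, modelled as a positive linear functional with ν(1) > 0
    (ν : (X → ℝ) →ₗ[ℝ] ℝ)
    (hν1 : 0 < ν (fun _ => (1 : ℝ)))
    (hminor : ∀ f : X → ℝ, (∀ x, 0 ≤ f x) →
      ∀ x, ν f * S.indicator (fun _ => (1 : ℝ)) x ≤ P f x)
    -- TP represents P on B₁ (identified with lp ∞ via f ↦ f/V)
    (TP : lp (fun _ : X => ℝ) ∞ →L[ℝ] lp (fun _ : X => ℝ) ∞)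
    (hTP : ∀ g : lp (fun _ : X => ℝ) ∞, ∀ x,
      TP g x = P (fun y => g y * V y) x / V x)
    -- TR represents R = P − ν(·)1_S on B₁
    (TR : lp (fun _ : X => ℝ) ∞ →L[ℝ] lp (fun _ : X => ℝ) ∞)
    (hTR : ∀ g : lp (fun _ : X => ℝ) ∞, ∀ x,
      TR g x = (P (fun y => g y * V y) x
        - ν (fun y => g y * V y) * S.indicator (fun _ => (1 : ℝ)) x) / V x) :
    specRadius TR ≤ (δ * ν (fun _ => (1 : ℝ)) + max 0 (L - ν V)) /
        (ν (fun _ => (1 : ℝ)) + max 0 (L - ν V)) ∧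
    (δ * ν (fun _ => (1 : ℝ)) + max 0 (L - ν V)) /
        (ν (fun _ => (1 : ℝ)) + max 0 (L - ν V)) < 1 ∧
    essRadius TP ≤ (δ * ν (fun _ => (1 : ℝ)) + max 0 (L - ν V)) /
        (ν (fun _ => (1 : ℝ)) + max 0 (L - ν V)) := by
  set τ := max 0 (L - ν V)
  set a := τ / ν (fun _ => 1) with ha_def
  have ha : 0 ≤ a := div_nonneg (le_max_left _ _) hν1.le
  have haν : a * ν 1 = τ := div_mul_cancel₀ _ hν1.ne'
  have hrate : (δ * ν (fun _ => 1) + τ) / (ν (fun _ => 1) + τ) = (δ + a) / (1 + a) := by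
    rw [ha_def]; field_simp
  rw [hrate]
  have hβ : 0 ≤ (δ + a) / (1 + a) := by positivity
  have hV0 (x : X) : 0 < V x := one_pos.trans_le (hV x)
  let R := P - ν.smulRight (S.indicator fun _ => 1)
  have hR : Monotone R :=
    (monotone_iff_map_nonneg R).2 fun f hf x => sub_nonneg.2 (hminor f hf x)
  have hRU : R (V + a • 1) ≤ ((δ + a) / (1 + a)) • (V + a • 1) :=
    drift_residual_le hV (S.indicator_nonneg fun _ _ => zero_le_one) hmarkov hdrift hδ1.le ha
      (by rw [haν]; exact le_max_right _ _)
  have hTR' : IsWeightedRep V TR R := fun g x => by simpa [R] using hTR g x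
  have hnorm : ∀ n, ‖TR ^ n‖ ≤ (1 + a) * ((δ + a) / (1 + a)) ^ n :=
    hTR'.norm_pow_le hV0 hR hβ (by positivity) (le_add_of_nonneg_right (smul_nonneg ha zero_le_one))
      (by rw [add_smul, one_smul]; exact add_le_add le_rfl (smul_le_smul_of_nonneg_left hV ha)) hRU
  have hK : IsCompactOperator (TP - TR) := by
    have hdiff := IsWeightedRep.sub (hTP : IsWeightedRep V TP P) hTR'
    rw [sub_sub_cancel] at hdiff
    exact hdiff.isCompactOperator_of_smulRight (memℓp_infty_indicator_div hV S)
  exact ⟨specRadius_le_of_norm_pow_le (by positivity) hβ hnorm,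
    (div_lt_one (by positivity)).2 (by linarith),
    essRadius_le_of_norm_pow_le hK (by positivity) hβ hnorm⟩

theorem drift_minorization_ess_radius
    (X : Type*) [MeasurableSpace X]
    (V : X → ℝ) (hV : ∀ x, 1 ≤ V x)
    (P : Module.End ℝ (X → ℝ))
    (hpos : ∀ f : X → ℝ, (∀ x, 0 ≤ f x) → ∀ x, 0 ≤ P f x)
    (hmarkov : P (fun _ => (1 : ℝ)) = fun _ => (1 : ℝ))
    (S : Set X)
    (δ L : ℝ) (hδ0 : 0 < δ) (hδ1 : δ < 1) (hL : 0 < L)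
    (hdrift : ∀ x, P V x ≤ δ * V x + L * S.indicator (fun _ => (1 : ℝ)) x)
    -- ν : a positive measure, modelled as a positive linear functional with ν(1) > 0
    (ν : (X → ℝ) →ₗ[ℝ] ℝ)
    (hνpos : ∀ f : X → ℝ, (∀ x, 0 ≤ f x) → 0 ≤ ν f)
    (hν1 : 0 < ν (fun _ => (1 : ℝ)))
    (hminor : ∀ f : X → ℝ, (∀ x, 0 ≤ f x) →
      ∀ x, ν f * S.indicator (fun _ => (1 : ℝ)) x ≤ P f x)
    -- TP represents P on B₁ (identified with lp ∞ via f ↦ f/V)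
    (TP : lp (fun _ : X => ℝ) ∞ →L[ℝ] lp (fun _ : X => ℝ) ∞)
    (hTP : ∀ g : lp (fun _ : X => ℝ) ∞, ∀ x,
      TP g x = P (fun y => g y * V y) x / V x)
    -- TR represents R = P − ν(·)1_S on B₁
    (TR : lp (fun _ : X => ℝ) ∞ →L[ℝ] lp (fun _ : X => ℝ) ∞)
    (hTR : ∀ g : lp (fun _ : X => ℝ) ∞, ∀ x,
      TR g x = (P (fun y => g y * V y) x
        - ν (fun y => g y * V y) * S.indicator (fun _ => (1 : ℝ)) x) / V x) :
    specRadius TR ≤ (δ * ν (fun _ => (1 : ℝ)) + max 0 (L - ν V)) /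
        (ν (fun _ => (1 : ℝ)) + max 0 (L - ν V)) ∧
    (δ * ν (fun _ => (1 : ℝ)) + max 0 (L - ν V)) /
        (ν (fun _ => (1 : ℝ)) + max 0 (L - ν V)) < 1 ∧
    essRadius TP ≤ (δ * ν (fun _ => (1 : ℝ)) + max 0 (L - ν V)) /
        (ν (fun _ => (1 : ℝ)) + max 0 (L - ν V)) :=
  drift_minorization_ess_radius_general X V hV P hmarkov S δ L hδ0 hδ1 hdrift ν hν1 hminor TP hTP TR
    hTR
end

section
/- Let P be a Markov kernel with PV ≤ δV + L·1_X (δ ∈ (0,1), L > 0) such that P^ℓ : B_0 → B_1 is a compact operator for some ℓ ≥ 1. Then P is power-bounded and quasi-compact on B_1 with essential spectral radius r_ess(P) ≤ δ. -/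
open Filter
open scoped ENNReal

/-!
Transport `P` to `lp ∞` through `f ↦ f / V`. Iterating the drift gives `Pⁿ V ≤ δⁿ V + C` with
`C = L / (1 - δ)`, so `‖TPⁿ‖ ≤ 1 + C`. Splitting
`P^(ℓ+m) = P^ℓ 1_{V ≤ R} P^m + P^ℓ 1_{V > R} P^m`, the first term factors through the compact
`P^ℓ : B₀ → B₁`, and the second has weighted norm at most `(1 + C) (δ^m + C / R)`, because
`C ≤ (C / R) V` where `V > R`. Letting `R → ∞`, the distance of `TP^(ℓ+m)` to the compact
operators is at most `(1 + C) δ^m`, so `r_ess(TP) ≤ δ`.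
-/

section PositiveOperator

theorem Module.End.pow_map_nonneg {R M : Type*} [Semiring R] [AddCommMonoid M] [Preorder M]
    [Module R M] {P : Module.End R M} (hP : ∀ f, 0 ≤ f → 0 ≤ P f) (n : ℕ) :
    ∀ f, 0 ≤ f → 0 ≤ (P ^ n) f := by
  induction n with
  | zero => exact fun f hf => hf
  | succ n ih => exact fun f hf => by rw [pow_succ, Module.End.mul_apply]; exact ih _ (hP f hf)

theorem abs_map_le_of_abs_le_s8 {F α β : Type*} [AddCommGroup α] [Lattice α] [IsOrderedAddMonoid α]
    [AddCommGroup β] [Lattice β] [IsOrderedAddMonoid β] [FunLike F α β] [AddMonoidHomClass F α β]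
    {f : F} (hf : ∀ a, 0 ≤ a → 0 ≤ f a) {a b : α} (hab : |a| ≤ b) : |f a| ≤ f b := by
  have hmono := (monotone_iff_map_nonneg f).2 hf
  obtain ⟨hle, hneg⟩ := abs_le'.1 hab
  exact abs_le'.2 ⟨hmono hle, by simpa using hmono hneg⟩

theorem Module.End.pow_apply_le_of_drift {M : Type*} [AddCommGroup M] [PartialOrder M]
    [IsOrderedAddMonoid M] [Module ℝ M] [PosSMulMono ℝ M] [SMulPosMono ℝ M]
    {P : Module.End ℝ M}
    (hP : ∀ f, 0 ≤ f → 0 ≤ P f) {u V : M} (hu : 0 ≤ u) (hPu : P u = u) {δ L C : ℝ}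
    (hδ : 0 ≤ δ) (hC : 0 ≤ C) (hCL : δ * C + L ≤ C) (hdrift : P V ≤ δ • V + L • u) (n : ℕ) :
    (P ^ n) V ≤ δ ^ n • V + C • u := by
  induction n with
  | zero => simpa using smul_nonneg hC hu
  | succ n ih =>
    have hmono := (monotone_iff_map_nonneg (P ^ n)).2 (pow_map_nonneg hP n)
    have hPnu : (P ^ n) u = u := by rw [Module.End.pow_apply, Function.iterate_fixed hPu]
    calc (P ^ (n + 1)) V = (P ^ n) (P V) := by rw [pow_succ, Module.End.mul_apply]
      _ ≤ (P ^ n) (δ • V + L • u) := hmono hdrift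
      _ = δ • (P ^ n) V + L • u := by rw [map_add, map_smul, map_smul, hPnu]
      _ ≤ δ • (δ ^ n • V + C • u) + L • u := by gcongr
      _ = δ ^ (n + 1) • V + (δ * C + L) • u := by
        rw [smul_add, smul_smul, smul_smul, add_assoc, add_smul, pow_succ', mul_comm δ C]
      _ ≤ δ ^ (n + 1) • V + C • u := by gcongr

end PositiveOperator

section Weighted

variable {X : Type*} {V : X → ℝ}

/-- `T` is `P` transported to `lp ∞` through the isometry `B_V ≅ lp ∞`, `f ↦ f / V`. -/
def IsConjByWeight (V : X → ℝ) (P : Module.End ℝ (X → ℝ))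
    (T : lp (fun _ : X => ℝ) ∞ →L[ℝ] lp (fun _ : X => ℝ) ∞) : Prop :=
  ∀ g x, T g x = P (fun y => g y * V y) x / V x

theorem IsConjByWeight.pow (hV : ∀ x, V x ≠ 0) {P : Module.End ℝ (X → ℝ)}
    {T : lp (fun _ : X => ℝ) ∞ →L[ℝ] lp (fun _ : X => ℝ) ∞} (hT : IsConjByWeight V P T) (n : ℕ) :
    IsConjByWeight V (P ^ n) (T ^ n) := by
  induction n with
  | zero => intro g x; simp [hV x]
  | succ n ih =>
    intro g x
    have hweight : (fun y => (T ^ n) g y * V y) = (P ^ n) (fun y => g y * V y) := by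
      funext y; rw [ih g y, div_mul_cancel₀ _ (hV y)]
    rw [pow_succ', mul_apply_eq_comp, hT, hweight, pow_succ', Module.End.mul_apply]

theorem abs_map_mul_weight_le (hV : ∀ x, 0 ≤ V x) {Q : Module.End ℝ (X → ℝ)}
    (hQ : ∀ f, 0 ≤ f → 0 ≤ Q f) (g : lp (fun _ : X => ℝ) ∞) :
    |Q (fun y => g y * V y)| ≤ ‖g‖ • Q V := by
  rw [← map_smul]
  refine abs_map_le_of_abs_le_s8 hQ fun y => ?_
  rw [Pi.abs_apply, abs_mul, abs_of_nonneg (hV y)]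
  exact mul_le_mul_of_nonneg_right (by simpa using lp.norm_apply_le_norm ENNReal.top_ne_zero g y)
    (hV y)

theorem IsConjByWeight.norm_le (hV : ∀ x, 0 < V x) {Q : Module.End ℝ (X → ℝ)}
    {T : lp (fun _ : X => ℝ) ∞ →L[ℝ] lp (fun _ : X => ℝ) ∞} (hT : IsConjByWeight V Q T)
    (hQ : ∀ f, 0 ≤ f → 0 ≤ Q f) {c : ℝ} (hc : 0 ≤ c) (hQV : Q V ≤ c • V) : ‖T‖ ≤ c := by
  refine T.opNorm_le_bound hc fun g => lp.norm_le_of_forall_le (by positivity) fun x => ?_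
  rw [Real.norm_eq_abs, hT, abs_div, abs_of_pos (hV x), div_le_iff₀ (hV x)]
  calc |Q (fun y => g y * V y) x| ≤ ‖g‖ * Q V x :=
        abs_map_mul_weight_le (fun y => (hV y).le) hQ g x
    _ ≤ ‖g‖ * (c * V x) := mul_le_mul_of_nonneg_left (hQV x) (norm_nonneg g)
    _ = c * ‖g‖ * V x := by ring

noncomputable def truncWeight (V : X → ℝ) (R : ℝ) : lp (fun _ : X => ℝ) ∞ :=
  ⟨{x | |V x| ≤ R}.indicator V, memℓp_infty ⟨max R 0, by
    rintro _ ⟨x, rfl⟩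
    by_cases hx : |V x| ≤ R <;> simp [hx]⟩⟩

noncomputable def tailCut (V : X → ℝ) (R : ℝ) : Module.End ℝ (X → ℝ) :=
  LinearMap.mulLeft ℝ ({x | R < |V x|}.indicator 1)

theorem tailCut_nonneg (V : X → ℝ) (R : ℝ) : ∀ f, 0 ≤ f → 0 ≤ tailCut V R f :=
  fun _ hf => mul_nonneg (Set.indicator_nonneg (fun _ _ => zero_le_one)) hf

theorem tailCut_le (hV : ∀ x, 0 < V x) {R a C : ℝ} (hR : 0 < R) (ha : 0 ≤ a) (hC : 0 ≤ C)
    {f : X → ℝ} (hf : f ≤ a • V + C • 1) : tailCut V R f ≤ (a + C / R) • V := by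
  intro x
  simp only [tailCut, LinearMap.mulLeft_apply, Pi.mul_apply, Set.indicator_apply,
    Set.mem_ofPred_eq, Pi.one_apply, Pi.smul_apply, smul_eq_mul]
  split_ifs with hx
  · rw [abs_of_pos (hV x)] at hx
    have hCR : C ≤ C / R * V x := by
      rw [div_mul_eq_mul_div, le_div_iff₀ hR]; exact mul_le_mul_of_nonneg_left hx.le hC
    have := hf x
    simp only [Pi.add_apply, Pi.smul_apply, smul_eq_mul, Pi.one_apply] at this
    nlinarith
  · rw [zero_mul]
    exact mul_nonneg (by positivity) (hV x).le

theorem IsConjByWeight.mul_sub_comp_truncWeight (hV : ∀ x, V x ≠ 0) {A B : Module.End ℝ (X → ℝ)}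
    {TA TB S : lp (fun _ : X => ℝ) ∞ →L[ℝ] lp (fun _ : X => ℝ) ∞} (hA : IsConjByWeight V A TA)
    (hB : IsConjByWeight V B TB) (hS : ∀ g : lp (fun _ : X => ℝ) ∞, ∀ x, S g x = A g x / V x)
    (R : ℝ) :
    IsConjByWeight V (A * tailCut V R * B)
      (TA * TB - S.comp ((ContinuousLinearMap.mul ℝ _ (truncWeight V R)).comp TB)) := by
  intro g x
  set h := B (fun y => g y * V y)
  have hsplit : (fun y => TB g y * V y) =
      (fun y => (truncWeight V R * TB g) y) + tailCut V R h := by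
    funext y
    simp only [hB g y, lp.infty_coeFn_mul, truncWeight, tailCut, LinearMap.mulLeft_apply,
      Pi.add_apply, Pi.mul_apply, Set.indicator_apply, Set.mem_ofPred_eq, Pi.one_apply]
    by_cases hy : |V y| ≤ R
    · simp only [hy, ↓reduceIte, not_lt.2 hy, zero_mul, add_zero]
      field_simp
    · simp [hy, lt_of_not_ge hy, h, hV y]
  rw [sub_apply, lp.coeFn_sub, Pi.sub_apply, mul_apply_eq_comp,
    hA, hsplit, ContinuousLinearMap.comp_apply, ContinuousLinearMap.comp_apply,
    ContinuousLinearMap.mul_apply', hS, map_add, Module.End.mul_apply, Module.End.mul_apply]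
  simp only [Pi.add_apply]
  ring

end Weighted

section EssentialRadius

variable {E : Type*} [NormedAddCommGroup E] [NormedSpace ℝ E]

noncomputable def essNorm (A : E →L[ℝ] E) : ℝ :=
  sInf {r : ℝ | ∃ K : E →L[ℝ] E, IsCompactOperator K ∧ ‖A - K‖ = r}

theorem essNorm_nonneg (A : E →L[ℝ] E) : 0 ≤ essNorm A :=
  Real.sInf_nonneg (by rintro _ ⟨K, -, rfl⟩; exact norm_nonneg _)

theorem essNorm_le {A K : E →L[ℝ] E} (hK : IsCompactOperator K) : essNorm A ≤ ‖A - K‖ :=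
  csInf_le ⟨0, by rintro _ ⟨K, -, rfl⟩; exact norm_nonneg _⟩ ⟨K, hK, rfl⟩

theorem essRadius_le_of_essNorm_pow_le (T : E →L[ℝ] E) {B δ : ℝ} (hB : 0 < B) (hδ : 0 ≤ δ)
    (h : ∀ᶠ n in atTop, essNorm (T ^ n) ≤ B * δ ^ n) : essRadius T ≤ δ := by
  have hlim : Tendsto (fun n : ℕ => B ^ (n : ℝ)⁻¹ * δ) atTop (nhds δ) := by
    simpa using ((Real.continuousAt_const_rpow hB.ne').tendsto.comp
      (tendsto_inv_atTop_zero.comp tendsto_natCast_atTop_atTop)).mul_const δ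
  show limsup (fun n : ℕ => essNorm (T ^ n) ^ (n : ℝ)⁻¹) atTop ≤ δ
  refine (limsup_le_limsup ?_ (isCoboundedUnder_le_of_le atTop fun n =>
    Real.rpow_nonneg (essNorm_nonneg _) _) hlim.isBoundedUnder_le).trans_eq hlim.limsup_eq
  filter_upwards [h, eventually_ne_atTop 0] with n hn hn0
  calc essNorm (T ^ n) ^ (n : ℝ)⁻¹ ≤ (B * δ ^ n) ^ (n : ℝ)⁻¹ :=
        Real.rpow_le_rpow (essNorm_nonneg _) hn (by positivity)
    _ = B ^ (n : ℝ)⁻¹ * δ := by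
        rw [Real.mul_rpow hB.le (by positivity), Real.pow_rpow_inv_natCast hδ hn0]

theorem essRadius_le_of_essNorm_pow_add_le (T : E →L[ℝ] E) (ℓ : ℕ) {B δ : ℝ} (hB : 0 < B)
    (hδ : 0 < δ) (h : ∀ m, essNorm (T ^ (ℓ + m)) ≤ B * δ ^ m) : essRadius T ≤ δ := by
  refine essRadius_le_of_essNorm_pow_le T (div_pos hB (pow_pos hδ ℓ)) hδ.le ?_
  filter_upwards [eventually_ge_atTop ℓ] with n hn
  obtain ⟨m, rfl⟩ := Nat.exists_eq_add_of_le hn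
  calc essNorm (T ^ (ℓ + m)) ≤ B * δ ^ m := h m
    _ = B / δ ^ ℓ * δ ^ (ℓ + m) := by rw [pow_add]; field_simp

end EssentialRadius

section WeakDrift

variable {X : Type*} {V : X → ℝ} {P : Module.End ℝ (X → ℝ)} {δ C : ℝ}
  {T : lp (fun _ : X => ℝ) ∞ →L[ℝ] lp (fun _ : X => ℝ) ∞}

theorem pow_apply_le_one_add_smul (hV : ∀ x, 1 ≤ V x) (hδ0 : 0 ≤ δ) (hδ1 : δ ≤ 1) (hC : 0 ≤ C)
    (hPV : ∀ n, (P ^ n) V ≤ δ ^ n • V + C • 1) (n : ℕ) : (P ^ n) V ≤ (1 + C) • V := by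
  intro x
  have h := hPV n x
  have hδn : δ ^ n ≤ 1 := pow_le_one₀ hδ0 hδ1
  simp only [Pi.add_apply, Pi.smul_apply, smul_eq_mul, Pi.one_apply] at h ⊢
  nlinarith [hV x, pow_nonneg hδ0 n]

theorem IsConjByWeight.norm_pow_le (hV : ∀ x, 1 ≤ V x) (hP : ∀ f, 0 ≤ f → 0 ≤ P f)
    (hT : IsConjByWeight V P T) (hδ0 : 0 ≤ δ) (hδ1 : δ ≤ 1) (hC : 0 ≤ C)
    (hPV : ∀ n, (P ^ n) V ≤ δ ^ n • V + C • 1) (n : ℕ) : ‖T ^ n‖ ≤ 1 + C :=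
  have hV0 : ∀ x, 0 < V x := fun x => one_pos.trans_le (hV x)
  (hT.pow (fun x => (hV0 x).ne') n).norm_le hV0 (Module.End.pow_map_nonneg hP n) (by positivity)
    (pow_apply_le_one_add_smul hV hδ0 hδ1 hC hPV n)

theorem IsConjByWeight.exists_norm_pow_add_sub_le (hV : ∀ x, 1 ≤ V x) (hP : ∀ f, 0 ≤ f → 0 ≤ P f)
    (hT : IsConjByWeight V P T) (hδ0 : 0 ≤ δ) (hδ1 : δ ≤ 1) (hC : 0 ≤ C)
    (hPV : ∀ n, (P ^ n) V ≤ δ ^ n • V + C • 1) {ℓ : ℕ}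
    {S : lp (fun _ : X => ℝ) ∞ →L[ℝ] lp (fun _ : X => ℝ) ∞}
    (hS : ∀ g : lp (fun _ : X => ℝ) ∞, ∀ x, S g x = (P ^ ℓ) g x / V x)
    (hScompact : IsCompactOperator S) (m : ℕ) {R : ℝ} (hR : 0 < R) :
    ∃ K : lp (fun _ : X => ℝ) ∞ →L[ℝ] lp (fun _ : X => ℝ) ∞,
      IsCompactOperator K ∧ ‖T ^ (ℓ + m) - K‖ ≤ (1 + C) * (δ ^ m + C / R) := by
  have hV0 : ∀ x, 0 < V x := fun x => one_pos.trans_le (hV x)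
  have hPℓ := Module.End.pow_map_nonneg hP ℓ
  have hPm := Module.End.pow_map_nonneg hP m
  refine ⟨S.comp ((ContinuousLinearMap.mul ℝ _ (truncWeight V R)).comp (T ^ m)),
    hScompact.comp_clm _, ?_⟩
  rw [pow_add]
  refine ((hT.pow (fun x => (hV0 x).ne') ℓ).mul_sub_comp_truncWeight (fun x => (hV0 x).ne')
    (hT.pow (fun x => (hV0 x).ne') m) hS R).norm_le hV0
    (fun f hf => hPℓ _ (tailCut_nonneg V R _ (hPm f hf))) (by positivity) ?_
  calc (P ^ ℓ) (tailCut V R ((P ^ m) V)) ≤ (P ^ ℓ) ((δ ^ m + C / R) • V) :=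
        (monotone_iff_map_nonneg _).2 hPℓ
          (tailCut_le hV0 hR (pow_nonneg hδ0 m) hC (hPV m))
    _ = (δ ^ m + C / R) • (P ^ ℓ) V := map_smul _ _ _
    _ ≤ (δ ^ m + C / R) • (1 + C) • V :=
        smul_le_smul_of_nonneg_left (pow_apply_le_one_add_smul hV hδ0 hδ1 hC hPV ℓ)
          (by positivity)
    _ = ((1 + C) * (δ ^ m + C / R)) • V := by rw [smul_smul, mul_comm]

theorem IsConjByWeight.essNorm_pow_add_le (hV : ∀ x, 1 ≤ V x) (hP : ∀ f, 0 ≤ f → 0 ≤ P f)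
    (hT : IsConjByWeight V P T) (hδ0 : 0 ≤ δ) (hδ1 : δ ≤ 1) (hC : 0 ≤ C)
    (hPV : ∀ n, (P ^ n) V ≤ δ ^ n • V + C • 1) {ℓ : ℕ}
    {S : lp (fun _ : X => ℝ) ∞ →L[ℝ] lp (fun _ : X => ℝ) ∞}
    (hS : ∀ g : lp (fun _ : X => ℝ) ∞, ∀ x, S g x = (P ^ ℓ) g x / V x)
    (hScompact : IsCompactOperator S) (m : ℕ) :
    essNorm (T ^ (ℓ + m)) ≤ (1 + C) * δ ^ m := by
  have hlim : Tendsto (fun R : ℝ => (1 + C) * (δ ^ m + C / R)) atTop (nhds ((1 + C) * δ ^ m)) := by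
    simpa using ((tendsto_const_nhds.div_atTop tendsto_id).const_add (δ ^ m)).const_mul (1 + C)
  refine ge_of_tendsto hlim ?_
  filter_upwards [eventually_gt_atTop 0] with R hR
  obtain ⟨K, hK, hle⟩ := hT.exists_norm_pow_add_sub_le hV hP hδ0 hδ1 hC hPV hS hScompact m hR
  exact (essNorm_le hK).trans hle

end WeakDrift

theorem weak_drift_compact_ess_radius_general
    (X : Type*)
    (V : X → ℝ) (hV : ∀ x, 1 ≤ V x)
    (P : Module.End ℝ (X → ℝ))
    (hpos : ∀ f : X → ℝ, (∀ x, 0 ≤ f x) → ∀ x, 0 ≤ P f x)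
    (hmarkov : P (fun _ => (1 : ℝ)) = fun _ => (1 : ℝ))
    (δ L : ℝ) (hδ0 : 0 < δ) (hδ1 : δ < 1) (hL : 0 < L)
    (hdrift : ∀ x, P V x ≤ δ * V x + L)
    (ℓ : ℕ)
    -- S represents P^ℓ : B₀ → B₁ and is a compact operator
    (S : lp (fun _ : X => ℝ) ∞ →L[ℝ] lp (fun _ : X => ℝ) ∞)
    (hS : ∀ g : lp (fun _ : X => ℝ) ∞, ∀ x, S g x = (P ^ ℓ) (fun y => g y) x / V x)
    (hScompact : IsCompactOperator S)
    -- TP represents P acting on B₁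
    (TP : lp (fun _ : X => ℝ) ∞ →L[ℝ] lp (fun _ : X => ℝ) ∞)
    (hTP : ∀ g : lp (fun _ : X => ℝ) ∞, ∀ x,
      TP g x = P (fun y => g y * V y) x / V x) :
    (∃ c : ℝ, ∀ n : ℕ, ‖TP ^ n‖ ≤ c) ∧ essRadius TP ≤ δ := by
  set C := L / (1 - δ) with hCdef
  have hC : 0 ≤ C := div_nonneg hL.le (sub_nonneg.2 hδ1.le)
  have hCL : δ * C + L = C := by
    rw [hCdef]; field_simp [(sub_pos.2 hδ1).ne']; ring
  have hPV : ∀ n, (P ^ n) V ≤ δ ^ n • V + C • 1 :=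
    Module.End.pow_apply_le_of_drift hpos zero_le_one hmarkov hδ0.le hC hCL.le
      fun x => by simpa using hdrift x
  exact ⟨⟨1 + C, IsConjByWeight.norm_pow_le hV hpos hTP hδ0.le hδ1.le hC hPV⟩,
    essRadius_le_of_essNorm_pow_add_le TP ℓ (by positivity) hδ0
      (IsConjByWeight.essNorm_pow_add_le hV hpos hTP hδ0.le hδ1.le hC hPV hS hScompact)⟩

theorem weak_drift_compact_ess_radius
    (X : Type*) [MeasurableSpace X]
    (V : X → ℝ) (hV : ∀ x, 1 ≤ V x)
    (P : Module.End ℝ (X → ℝ))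
    (hpos : ∀ f : X → ℝ, (∀ x, 0 ≤ f x) → ∀ x, 0 ≤ P f x)
    (hmarkov : P (fun _ => (1 : ℝ)) = fun _ => (1 : ℝ))
    (δ L : ℝ) (hδ0 : 0 < δ) (hδ1 : δ < 1) (hL : 0 < L)
    (hdrift : ∀ x, P V x ≤ δ * V x + L)
    (ℓ : ℕ) (hℓ : 1 ≤ ℓ)
    -- S represents P^ℓ : B₀ → B₁ and is a compact operator
    (S : lp (fun _ : X => ℝ) ∞ →L[ℝ] lp (fun _ : X => ℝ) ∞)
    (hS : ∀ g : lp (fun _ : X => ℝ) ∞, ∀ x, S g x = (P ^ ℓ) (fun y => g y) x / V x)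
    (hScompact : IsCompactOperator S)
    -- TP represents P acting on B₁
    (TP : lp (fun _ : X => ℝ) ∞ →L[ℝ] lp (fun _ : X => ℝ) ∞)
    (hTP : ∀ g : lp (fun _ : X => ℝ) ∞, ∀ x,
      TP g x = P (fun y => g y * V y) x / V x) :
    (∃ c : ℝ, ∀ n : ℕ, ‖TP ^ n‖ ≤ c) ∧ essRadius TP ≤ δ :=
  weak_drift_compact_ess_radius_general X V hV P hpos hmarkov δ L hδ0 hδ1 hL hdrift ℓ S hS hScompact
    TP hTP
end

section
/- In the discrete truncation setting, if PV ≤ δV + L·1_ℕ with δ ∈ (0,1), L > 0 and V increasing unbounded with V(0)=1, then for every k ≥ 1, ‖P̂_k − P‖_{0,1} ≤ K/V(k) with K := max(2(δ+L), 1), where ‖T‖_{0,1} = sup{sup_i |(Tf)(i)|/V(i) : sup_i |f(i)| ≤ 1}. In particular ‖P̂_k − P‖_{0,1} → 0 as k → ∞. -/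
/-- The truncated-augmented sub-Markov kernel on `ℕ`. -/
noncomputable def truncAug (P : ℕ → ℕ → ℝ) (k : ℕ) (i j : ℕ) : ℝ :=
  if i ≤ k then
    (if j < k then P i j else if j = k then ∑' l : ℕ, (if k ≤ l then P i l else 0) else 0)
  else 0

/-!
For `i ≤ k` the `i`-th row of `P̂ₖ` agrees with that of `P` below `k` and puts the tail mass
`Sᵢ = ∑_{l ≥ k} P(i,l)` on `k`, so `(P̂ₖf)(i) − (Pf)(i) = ∑_{l ≥ k} P(i,l) (f(k) − f(l))` has
modulus at most `2 Sᵢ`. Since `V` is increasing, `V(k) Sᵢ ≤ (PV)(i) ≤ δ V(i) + L ≤ (δ + L) V(i)`.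
For `i > k` the row of `P̂ₖ` vanishes, and `|(Pf)(i)| ≤ 1 ≤ V(i)/V(k)`.
-/

open Finset

lemma tsum_ite_le_eq_tsum_nat_add (p : ℕ → ℝ) (k : ℕ) :
    ∑' l, (if k ≤ l then p l else 0) = ∑' l, p (l + k) := by
  rw [← (add_left_injective k).tsum_eq]
  · simp
  · intro l hl
    have hkl : k ≤ l := by
      by_contra h
      simp [h] at hl
    exact ⟨l - k, Nat.sub_add_cancel hkl⟩

section Row

variable {p f : ℕ → ℝ} {c : ℝ}

lemma summable_mul_of_abs_le (hp0 : ∀ j, 0 ≤ p j) (hp : Summable p) (hf : ∀ j, |f j| ≤ c) :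
    Summable fun j => p j * f j :=
  Summable.of_norm_bounded (hp.mul_right c) fun j => by
    rw [Real.norm_eq_abs, abs_mul, abs_of_nonneg (hp0 j)]
    exact mul_le_mul_of_nonneg_left (hf j) (hp0 j)

lemma abs_tsum_mul_le (hp0 : ∀ j, 0 ≤ p j) (hp : Summable p) (hf : ∀ j, |f j| ≤ c) :
    |∑' j, p j * f j| ≤ (∑' j, p j) * c := by
  rw [← tsum_mul_right, ← Real.norm_eq_abs]
  refine tsum_of_norm_bounded (hp.mul_right c).hasSum fun j => ?_
  rw [Real.norm_eq_abs, abs_mul, abs_of_nonneg (hp0 j)]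
  exact mul_le_mul_of_nonneg_left (hf j) (hp0 j)

lemma abs_sum_range_add_tail_mul_sub_tsum_le (hp0 : ∀ j, 0 ≤ p j) (hp : Summable p)
    (hf : ∀ j, |f j| ≤ 1) (k : ℕ) :
    |∑ j ∈ range k, p j * f j + (∑' l, p (l + k)) * f k - ∑' j, p j * f j|
      ≤ (∑' l, p (l + k)) * 2 := by
  have hp_tail : Summable fun l => p (l + k) := (summable_nat_add_iff k).2 hp
  have hpf := summable_mul_of_abs_le hp0 hp hf
  have hpf_tail : Summable fun l => p (l + k) * f (l + k) := (summable_nat_add_iff k).2 hpf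
  have hdiff : ∀ l, |f k - f (l + k)| ≤ 2 := fun l =>
    (abs_sub _ _).trans (by linarith [hf k, hf (l + k)])
  rw [← hpf.sum_add_tsum_nat_add k, add_sub_add_left_eq_sub, ← tsum_mul_right,
    ← (hp_tail.mul_right (f k)).tsum_sub hpf_tail]
  simpa only [mul_sub] using abs_tsum_mul_le (fun l => hp0 (l + k)) hp_tail hdiff

lemma mul_tsum_nat_add_le {V : ℕ → ℝ} (hp0 : ∀ j, 0 ≤ p j) (hp : Summable p)
    (hV0 : ∀ j, 0 ≤ V j) (hV : Monotone V) (hpV : Summable fun j => p j * V j) (k : ℕ) :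
    V k * ∑' l, p (l + k) ≤ ∑' j, p j * V j := by
  rw [← tsum_mul_left]
  refine Summable.tsum_le_tsum_of_inj (· + k) (add_left_injective k)
    (fun j _ => mul_nonneg (hp0 j) (hV0 j)) (fun l => ?_)
    (((summable_nat_add_iff k).2 hp).mul_left (V k)) hpV
  rw [mul_comm]
  exact mul_le_mul_of_nonneg_left (hV (Nat.le_add_left k l)) (hp0 _)

end Row

section TruncAug

variable {P : ℕ → ℕ → ℝ} {k i : ℕ}

lemma tsum_truncAug_mul_of_le (hik : i ≤ k) (f : ℕ → ℝ) :
    ∑' j, truncAug P k i j * f j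
      = ∑ j ∈ range k, P i j * f j + (∑' l, P i (l + k)) * f k := by
  rw [tsum_eq_sum (s := range (k + 1)), sum_range_succ, ← tsum_ite_le_eq_tsum_nat_add]
  · congr 1
    · refine sum_congr rfl fun j hj => ?_
      simp [truncAug, hik, mem_range.1 hj]
    · simp [truncAug, hik]
  · intro j hj
    have hkj : k < j := by simpa [Nat.lt_succ_iff] using hj
    simp [truncAug, hik, hkj.ne', not_lt.2 hkj.le]

lemma tsum_truncAug_mul_of_lt (hki : k < i) (f : ℕ → ℝ) :
    ∑' j, truncAug P k i j * f j = 0 := by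
  simp [truncAug, not_le.2 hki]

end TruncAug

theorem truncAug_zero_one_norm_general
    (P : ℕ → ℕ → ℝ)
    (hPnonneg : ∀ i j, 0 ≤ P i j)
    (hProw : ∀ i, Summable (P i))
    (hPstoch : ∀ i, ∑' j, P i j = 1)
    (V : ℕ → ℝ) (hV1 : ∀ n, 1 ≤ V n) (hVmono : Monotone V)
    (hVtop : Filter.Tendsto V Filter.atTop Filter.atTop)
    (δ L : ℝ) (hL : 0 < L)
    (hsum : ∀ i, Summable (fun j => P i j * V j))
    (hdrift : ∀ i, ∑' j, P i j * V j ≤ δ * V i + L) :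
    (∀ k : ℕ, 1 ≤ k → ∀ f : ℕ → ℝ, (∀ j, |f j| ≤ 1) → ∀ i,
      |(∑' j, truncAug P k i j * f j) - ∑' j, P i j * f j|
        ≤ max (2 * (δ + L)) 1 / V k * V i) ∧
    Filter.Tendsto (fun k : ℕ => max (2 * (δ + L)) 1 / V k) Filter.atTop (nhds 0) := by
  have hVpos : ∀ n, 0 < V n := fun n => one_pos.trans_le (hV1 n)
  refine ⟨fun k _ f hf i => ?_, tendsto_const_nhds.div_atTop hVtop⟩
  rw [div_mul_eq_mul_div, le_div_iff₀ (hVpos k)]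
  rcases le_or_gt i k with hik | hki
  · have htail := mul_tsum_nat_add_le (hPnonneg i) (hProw i) (fun j => (hVpos j).le) hVmono
      (hsum i) k
    rw [tsum_truncAug_mul_of_le hik]
    calc _ ≤ (∑' l, P i (l + k)) * 2 * V k :=
          mul_le_mul_of_nonneg_right
            (abs_sum_range_add_tail_mul_sub_tsum_le (hPnonneg i) (hProw i) hf k) (hVpos k).le
      _ ≤ 2 * (δ * V i + L) := by linarith [hdrift i]
      _ ≤ max (2 * (δ + L)) 1 * V i := by
          nlinarith [le_max_left (2 * (δ + L)) 1, hV1 i]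
  · rw [tsum_truncAug_mul_of_lt hki, zero_sub, abs_neg]
    have hPf := abs_tsum_mul_le (hPnonneg i) (hProw i) hf
    rw [hPstoch i, one_mul] at hPf
    calc _ ≤ 1 * V i := mul_le_mul hPf (hVmono hki.le) (hVpos k).le zero_le_one
      _ ≤ max (2 * (δ + L)) 1 * V i :=
          mul_le_mul_of_nonneg_right (le_max_right _ _) (hVpos i).le

theorem truncAug_zero_one_norm
    (P : ℕ → ℕ → ℝ)
    (hPnonneg : ∀ i j, 0 ≤ P i j)
    (hProw : ∀ i, Summable (P i))
    (hPstoch : ∀ i, ∑' j, P i j = 1)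
    (V : ℕ → ℝ) (hV1 : ∀ n, 1 ≤ V n) (hV0 : V 0 = 1) (hVmono : Monotone V)
    (hVtop : Filter.Tendsto V Filter.atTop Filter.atTop)
    (δ L : ℝ) (hδ0 : 0 < δ) (hδ1 : δ < 1) (hL : 0 < L)
    (hsum : ∀ i, Summable (fun j => P i j * V j))
    (hdrift : ∀ i, ∑' j, P i j * V j ≤ δ * V i + L) :
    (∀ k : ℕ, 1 ≤ k → ∀ f : ℕ → ℝ, (∀ j, |f j| ≤ 1) → ∀ i,
      |(∑' j, truncAug P k i j * f j) - ∑' j, P i j * f j|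
        ≤ max (2 * (δ + L)) 1 / V k * V i) ∧
    Filter.Tendsto (fun k : ℕ => max (2 * (δ + L)) 1 / V k) Filter.atTop (nhds 0) :=
  truncAug_zero_one_norm_general P hPnonneg hProw hPstoch V hV1 hVmono hVtop δ L hL hsum hdrift
end

section
/- Suppose PV ≤ δV + L·1_X with δ ∈ (0,1), and suppose limsup_i (PV)(i)/V(i) > 0 (taken along any exhaustion B_k ↑ X). Then the truncated kernels P̂_k do NOT converge to P in operator norm on B_1: inf_k ‖P − P̂_k‖_1 ≥ limsup_k sup_{i ∉ B_k} (PV)(i)/V(i) > 0. -/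
open Filter

/- Rows of `P̂ₖ` vanish outside `Bₖ = {0, …, k}`, so testing the operator-norm bound `c k` on
`f = V` at a state `i > k` leaves `(PV)(i) ≤ c k · V(i)`.  Hence every `c k` dominates
`limsup_i (PV)(i)/V(i)`, which is positive, so `c k` cannot tend to `0`. -/

theorem truncAug_eq_zero_of_lt (P : ℕ → ℕ → ℝ) {k i : ℕ} (hki : k < i) (j : ℕ) :
    truncAug P k i j = 0 := by
  simp [truncAug, not_le.mpr hki]

theorem tsum_truncAug_mul_eq_zero_of_lt (P : ℕ → ℕ → ℝ) (f : ℕ → ℝ) {k i : ℕ} (hki : k < i) :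
    ∑' j, truncAug P k i j * f j = 0 := by
  simp [truncAug_eq_zero_of_lt P hki]

theorem tsum_mul_div_le_of_truncAug_bound {P : ℕ → ℕ → ℝ} (hP : ∀ i j, 0 ≤ P i j)
    {V : ℕ → ℝ} (hV : ∀ n, 0 < V n) {k i : ℕ} (hki : k < i) {C : ℝ}
    (hC : |(∑' j, P i j * V j) - ∑' j, truncAug P k i j * V j| ≤ C * V i) :
    (∑' j, P i j * V j) / V i ≤ C := by
  have hPV : 0 ≤ ∑' j, P i j * V j := tsum_nonneg fun j => mul_nonneg (hP i j) (hV j).le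
  rw [tsum_truncAug_mul_eq_zero_of_lt P V hki, sub_zero, abs_of_nonneg hPV] at hC
  exact (div_le_iff₀ (hV i)).mpr hC

theorem limsup_le_of_nonneg_of_eventually_le {α : Type*} {l : Filter α} [l.NeBot]
    {u : α → ℝ} (hu : ∀ a, 0 ≤ u a) {C : ℝ} (h : ∀ᶠ a in l, u a ≤ C) :
    limsup u l ≤ C :=
  limsup_le_of_le (isCoboundedUnder_le_of_le l hu) h

theorem truncAug_no_operator_norm_convergence_general
    (P : ℕ → ℕ → ℝ)
    (hPnonneg : ∀ i j, 0 ≤ P i j)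
    (V : ℕ → ℝ) (hV1 : ∀ n, 1 ≤ V n)
    (hlimsup : 0 < Filter.limsup (fun i => (∑' j, P i j * V j) / V i) Filter.atTop)
    -- `c k` is an upper bound for the operator norm `‖P − P̂ₖ‖₁` on `B₁`
    (c : ℕ → ℝ)
    (hc : ∀ k, ∀ f : ℕ → ℝ, (∀ j, |f j| ≤ V j) → ∀ i,
      |(∑' j, P i j * f j) - ∑' j, truncAug P k i j * f j| ≤ c k * V i) :
    (∀ k, Filter.limsup (fun i => (∑' j, P i j * V j) / V i) Filter.atTop ≤ c k) ∧
    ¬ Tendsto c atTop (nhds 0) := by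
  have hVpos : ∀ n, 0 < V n := fun n => one_pos.trans_le (hV1 n)
  have hVtest : ∀ j, |V j| ≤ V j := fun j => (abs_of_pos (hVpos j)).le
  have hratio_nonneg : ∀ i, 0 ≤ (∑' j, P i j * V j) / V i := fun i =>
    div_nonneg (tsum_nonneg fun j => mul_nonneg (hPnonneg i j) (hVpos j).le) (hVpos i).le
  have hle : ∀ k, limsup (fun i => (∑' j, P i j * V j) / V i) atTop ≤ c k := fun k =>
    limsup_le_of_nonneg_of_eventually_le hratio_nonneg <|
      (eventually_gt_atTop k).mono fun i hki =>
        tsum_mul_div_le_of_truncAug_bound hPnonneg hVpos hki (hc k V hVtest i)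
  exact ⟨hle, fun hc0 => (ge_of_tendsto' hc0 hle).not_gt hlimsup⟩

theorem truncAug_no_operator_norm_convergence
    (P : ℕ → ℕ → ℝ)
    (hPnonneg : ∀ i j, 0 ≤ P i j)
    (hProw : ∀ i, Summable (P i))
    (hPstoch : ∀ i, ∑' j, P i j = 1)
    (V : ℕ → ℝ) (hV1 : ∀ n, 1 ≤ V n)
    (δ L : ℝ) (hδ0 : 0 < δ) (hδ1 : δ < 1) (hL : 0 < L)
    (hsum : ∀ i, Summable (fun j => P i j * V j))
    (hdrift : ∀ i, ∑' j, P i j * V j ≤ δ * V i + L)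
    (hlimsup : 0 < Filter.limsup (fun i => (∑' j, P i j * V j) / V i) Filter.atTop)
    -- `c k` is an upper bound for the operator norm `‖P − P̂ₖ‖₁` on `B₁`
    (c : ℕ → ℝ)
    (hc : ∀ k, ∀ f : ℕ → ℝ, (∀ j, |f j| ≤ V j) → ∀ i,
      |(∑' j, P i j * f j) - ∑' j, truncAug P k i j * f j| ≤ c k * V i) :
    (∀ k, Filter.limsup (fun i => (∑' j, P i j * V j) / V i) Filter.atTop ≤ c k) ∧
    ¬ Tendsto c atTop (nhds 0) :=
  truncAug_no_operator_norm_convergence_general P hPnonneg V hV1 hlimsup c hc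
end

section
/- Consider the discrete truncation setting with PV ≤ δV + L·1_ℕ and π the P-invariant probability with π(V) < ∞, and π̂_k the extension of the P_k-invariant probability (φ_k = 1_{B_k}). Then π̂_k(1_ℕ)·|1 − π(φ_k)| = Σ_{j>k} π({j}) ≤ π(V)/V(k) ≤ L/((1−δ)V(k)). Combining with the general total-variation bound yields ‖π̂_k − π‖_TV ≤ (L/(1−δ))·(1 + 2KC_k/ρ_k + A·K·ln V(k)/ln(ρ_k^{−1}))·(1/V(k)), where K = max(2(δ+L),1), A = 1 + L/(1−δ), and (ρ_k, C_k) are a rate and constant in the V-geometric ergodicity of P̂_k. -/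
/-!
Split `π̂ₖ f - π f = (π̂ₖ f - π (P̂ₖⁿ f)) + (π (P̂ₖⁿ f) - π f)`. Integrating the `V`-geometric
ergodicity of `P̂ₖ` against `π` bounds the first term by `π(j > k) + Cₖ ρₖⁿ π(V)`. Since `π P = π`,
the second telescopes into `n` terms `π ((P̂ₖ - P) P̂ₖᵐ f)`; as `P̂ₖ` only redirects to `k` the
transitions of `P` leaving `{0, …, k}`, `|(P̂ₖ - P) g| ≤ 2 (P V)/V(k) ≤ K V/V(k)` for `|g| ≤ 1`.
The drift condition gives `π(V) ≤ L/(1-δ)`, and `n = ⌈ln V(k) / ln ρₖ⁻¹⌉` makes `ρₖⁿ ≤ 1/V(k)`.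
-/

lemma summable_of_tsum_eq_one {ι : Type*} {f : ι → ℝ} (h : ∑' i, f i = 1) : Summable f := by
  by_contra hf
  simp [tsum_eq_zero_of_not_summable hf] at h

lemma abs_mul_le_of_abs_le_one {w g : ℝ} (hw : 0 ≤ w) (hg : |g| ≤ 1) : |w * g| ≤ w := by
  rw [abs_mul, abs_of_nonneg hw]
  exact mul_le_of_le_one_right hw hg

lemma Summable.mul_of_abs_le_one {ι : Type*} {w g : ι → ℝ} (hw : Summable w)
    (hw0 : ∀ i, 0 ≤ w i) (hg : ∀ i, |g i| ≤ 1) : Summable fun i => w i * g i :=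
  hw.of_norm_bounded fun i => abs_mul_le_of_abs_le_one (hw0 i) (hg i)

lemma abs_tsum_le_of_abs_le {ι : Type*} {f g : ι → ℝ} (hg : Summable g)
    (h : ∀ i, |f i| ≤ g i) : |∑' i, f i| ≤ ∑' i, g i :=
  tsum_of_norm_bounded (f := f) hg.hasSum h

lemma abs_tsum_mul_le_of_abs_le_one {ι : Type*} {w g : ι → ℝ} (hw : Summable w)
    (hw0 : ∀ i, 0 ≤ w i) (hg : ∀ i, |g i| ≤ 1) : |∑' i, w i * g i| ≤ ∑' i, w i :=
  abs_tsum_le_of_abs_le hw fun i => abs_mul_le_of_abs_le_one (hw0 i) (hg i)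

lemma abs_iterate_sub_le {E : Type*} {T : E → E} {Φ : E → ℝ} {B : Set E} {ε : ℝ}
    (hT : Set.MapsTo T B B) (hΦ : ∀ g ∈ B, |Φ (T g) - Φ g| ≤ ε) (n : ℕ) {f : E} (hf : f ∈ B) :
    |Φ (T^[n] f) - Φ f| ≤ n * ε := by
  induction n with
  | zero => simp
  | succ n ih =>
    rw [Function.iterate_succ_apply', Nat.cast_succ, add_mul, one_mul]
    calc |Φ (T (T^[n] f)) - Φ f| ≤ |Φ (T (T^[n] f)) - Φ (T^[n] f)| + |Φ (T^[n] f) - Φ f| :=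
          abs_sub_le _ _ _
      _ ≤ n * ε + ε := by linarith [hΦ _ (hT.iterate n hf)]

section Invariance

variable {P : ℕ → ℕ → ℝ} {π : ℕ → ℝ}

lemma tsum_mul_tsum_kernel_eq_of_invariant (hπ0 : ∀ i, 0 ≤ π i) (hP0 : ∀ i j, 0 ≤ P i j)
    (hπinv : ∀ j, ∑' i, π i * P i j = π j) {h : ℕ → ℝ}
    (hrow : ∀ i, Summable fun j => P i j * |h j|)
    (hπrow : Summable fun i => π i * ∑' j, P i j * |h j|) :
    ∑' i, π i * ∑' j, P i j * h j = ∑' j, π j * h j := by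
  have hG : Summable (Function.uncurry fun i j => π i * (P i j * |h j|)) := by
    refine (summable_prod_of_nonneg fun p => ?_).2
      ⟨fun i => (hrow i).mul_left (π i), by simpa only [Function.uncurry, tsum_mul_left] using hπrow⟩
    exact mul_nonneg (hπ0 p.1) (mul_nonneg (hP0 p.1 p.2) (abs_nonneg _))
  have hF : Summable (Function.uncurry fun i j => π i * (P i j * h j)) :=
    hG.of_norm_bounded fun p => by
      simp only [Function.uncurry, Real.norm_eq_abs, abs_mul, abs_of_nonneg (hπ0 p.1),
        abs_of_nonneg (hP0 p.1 p.2), le_refl]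
  calc ∑' i, π i * ∑' j, P i j * h j = ∑' i, ∑' j, π i * (P i j * h j) := by
        simp only [tsum_mul_left]
    _ = ∑' j, ∑' i, π i * (P i j * h j) := hF.tsum_comm.symm
    _ = ∑' j, π j * h j := by
        refine tsum_congr fun j => ?_
        rw [← hπinv j, ← tsum_mul_right]
        exact tsum_congr fun i => by ring

lemma tsum_mul_tsum_kernel_eq_of_invariant_of_abs_le_one (hπ0 : ∀ i, 0 ≤ π i)
    (hπ : Summable π) (hP0 : ∀ i j, 0 ≤ P i j) (hProw : ∀ i, Summable (P i))
    (hPstoch : ∀ i, ∑' j, P i j = 1) (hπinv : ∀ j, ∑' i, π i * P i j = π j) {g : ℕ → ℝ}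
    (hg : ∀ j, |g j| ≤ 1) :
    ∑' i, π i * ∑' j, P i j * g j = ∑' j, π j * g j := by
  have hrow i : Summable fun j => P i j * |g j| :=
    (hProw i).mul_of_abs_le_one (hP0 i) fun j => by rw [abs_abs]; exact hg j
  refine tsum_mul_tsum_kernel_eq_of_invariant hπ0 hP0 hπinv hrow
    (hπ.of_norm_bounded fun i => ?_)
  refine abs_mul_le_of_abs_le_one (hπ0 i) ?_
  have := abs_tsum_mul_le_of_abs_le_one (hProw i) (hP0 i) fun j => by rw [abs_abs]; exact hg j
  rwa [hPstoch i] at this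

lemma tsum_mul_le_div_one_sub_of_drift {V : ℕ → ℝ} {δ L : ℝ} (hδ1 : δ < 1)
    (hπ0 : ∀ i, 0 ≤ π i) (hπ1 : ∑' i, π i = 1) (hP0 : ∀ i j, 0 ≤ P i j) (hV0 : ∀ j, 0 ≤ V j)
    (hsum : ∀ i, Summable fun j => P i j * V j) (hdrift : ∀ i, ∑' j, P i j * V j ≤ δ * V i + L)
    (hπV : Summable fun j => π j * V j) (hπinv : ∀ j, ∑' i, π i * P i j = π j) :
    ∑' j, π j * V j ≤ L / (1 - δ) := by
  have hπ := summable_of_tsum_eq_one hπ1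
  have hbound i : π i * ∑' j, P i j * V j ≤ δ * (π i * V i) + L * π i := by
    nlinarith [mul_le_mul_of_nonneg_left (hdrift i) (hπ0 i)]
  have hdom : Summable fun i => δ * (π i * V i) + L * π i :=
    (hπV.mul_left δ).add (hπ.mul_left L)
  have hrow : Summable fun i => π i * ∑' j, P i j * V j :=
    hdom.of_nonneg_of_le (fun i => mul_nonneg (hπ0 i) (tsum_nonneg fun j =>
      mul_nonneg (hP0 i j) (hV0 j))) hbound
  have hinv := tsum_mul_tsum_kernel_eq_of_invariant hπ0 hP0 hπinv (h := V)
    (by simpa only [abs_of_nonneg (hV0 _)] using hsum)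
    (by simpa only [abs_of_nonneg (hV0 _)] using hrow)
  have : ∑' j, π j * V j ≤ δ * ∑' j, π j * V j + L := by
    calc ∑' j, π j * V j = ∑' i, π i * ∑' j, P i j * V j := hinv.symm
      _ ≤ ∑' i, (δ * (π i * V i) + L * π i) := hrow.tsum_le_tsum hbound hdom
      _ = δ * ∑' j, π j * V j + L := by
        rw [(hπV.mul_left δ).tsum_add (hπ.mul_left L), tsum_mul_left, tsum_mul_left, hπ1, mul_one]
  rw [le_div_iff₀ (by linarith)]
  linarith

end Invariance

section TruncAug

variable {P : ℕ → ℕ → ℝ} {k i : ℕ}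

lemma truncAug_of_not_le (hik : ¬ i ≤ k) (j : ℕ) : truncAug P k i j = 0 := by
  simp [truncAug, hik]

lemma truncAug_of_lt (j : ℕ) (hkj : k < j) : truncAug P k i j = 0 := by
  simp [truncAug, hkj.not_gt, hkj.ne']

lemma tsum_truncAug_mul (hProw : Summable (P i)) (hik : i ≤ k) (g : ℕ → ℝ) :
    ∑' j, truncAug P k i j * g j = ∑' l, P i l * g (min l k) := by
  have htail : Summable fun l => P i (l + k) := (summable_nat_add_iff k).2 hProw
  have hmass : ∑' l, (if k ≤ l then P i l else 0) = ∑' l, P i (l + k) := by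
    have hs : Summable fun l => if k ≤ l then P i l else 0 :=
      (summable_nat_add_iff k).1 (by simpa using htail)
    rw [← hs.sum_add_tsum_nat_add k, Finset.sum_eq_zero fun l hl => if_neg (by simpa using hl)]
    simp
  have hs : Summable fun l => P i l * g (min l k) :=
    (summable_nat_add_iff k).1 (by simpa using htail.mul_right (g k))
  rw [tsum_eq_sum (s := Finset.range (k + 1)) fun j hj =>
      by rw [truncAug_of_lt j (by simpa using hj), zero_mul],
    ← hs.sum_add_tsum_nat_add k, Finset.sum_range_succ]
  simp only [min_eq_right (Nat.le_add_left k _), tsum_mul_right, ← hmass]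
  congr 1
  · refine Finset.sum_congr rfl fun j hj => ?_
    have hjk : j < k := Finset.mem_range.1 hj
    simp [truncAug, hik, hjk, min_eq_left hjk.le]
  · simp [truncAug, hik]

lemma abs_tsum_truncAug_mul_le_one (hP0 : ∀ i j, 0 ≤ P i j) (hProw : ∀ i, Summable (P i))
    (hPstoch : ∀ i, ∑' j, P i j = 1) {g : ℕ → ℝ} (hg : ∀ j, |g j| ≤ 1) (i : ℕ) :
    |∑' j, truncAug P k i j * g j| ≤ 1 := by
  by_cases hik : i ≤ k
  · rw [tsum_truncAug_mul (hProw i) hik, ← hPstoch i]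
    exact abs_tsum_mul_le_of_abs_le_one (hProw i) (hP0 i) fun l => hg _
  · simp [truncAug_of_not_le hik]

end TruncAug

section Perturbation

variable {P : ℕ → ℕ → ℝ} {V : ℕ → ℝ} {k i : ℕ} {g : ℕ → ℝ}

lemma abs_tsum_truncAug_mul_sub_le_of_le (hP0 : ∀ i j, 0 ≤ P i j) (hProw : Summable (P i))
    (hsum : Summable fun j => P i j * V j) (hV0 : ∀ j, 0 ≤ V j) (hVmono : Monotone V)
    (hVk : 0 < V k) (hg : ∀ j, |g j| ≤ 1) (hik : i ≤ k) :
    |∑' j, truncAug P k i j * g j - ∑' j, P i j * g j| ≤ 2 * (∑' l, P i l * V l) / V k := by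
  have hPg : Summable fun l => P i l * g l := hProw.mul_of_abs_le_one (hP0 i) hg
  have hPgk : Summable fun l => P i l * g (min l k) :=
    hProw.mul_of_abs_le_one (hP0 i) fun l => hg _
  have hterm l : |P i l * g (min l k) - P i l * g l| ≤ 2 / V k * (P i l * V l) := by
    rcases le_or_gt l k with hlk | hkl
    · rw [min_eq_left hlk, sub_self, abs_zero]
      exact mul_nonneg (by positivity) (mul_nonneg (hP0 i l) (hV0 l))
    · have hg2 : |g (min l k) - g l| ≤ 2 := by
        linarith [abs_sub (g (min l k)) (g l), hg (min l k), hg l]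
      rw [← mul_sub, abs_mul, abs_of_nonneg (hP0 i l), div_mul_eq_mul_div, le_div_iff₀ hVk]
      nlinarith [hP0 i l, hVmono hkl.le, mul_le_mul_of_nonneg_left hg2 (hP0 i l)]
  rw [tsum_truncAug_mul hProw hik, ← hPgk.tsum_sub hPg, mul_div_right_comm, ← tsum_mul_left]
  exact abs_tsum_le_of_abs_le (hsum.mul_left _) hterm

lemma abs_tsum_truncAug_mul_sub_le {δ L : ℝ} (hL : 0 ≤ L) (hP0 : ∀ i j, 0 ≤ P i j)
    (hProw : ∀ i, Summable (P i)) (hPstoch : ∀ i, ∑' j, P i j = 1) (hV1 : ∀ n, 1 ≤ V n)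
    (hVmono : Monotone V) (hsum : ∀ i, Summable fun j => P i j * V j)
    (hdrift : ∀ i, ∑' j, P i j * V j ≤ δ * V i + L) (hg : ∀ j, |g j| ≤ 1) (i : ℕ) :
    |∑' j, truncAug P k i j * g j - ∑' j, P i j * g j| ≤ max (2 * (δ + L)) 1 * V i / V k := by
  have hVk : 0 < V k := by linarith [hV1 k]
  rw [le_div_iff₀ hVk]
  by_cases hik : i ≤ k
  · have h := abs_tsum_truncAug_mul_sub_le_of_le hP0 (hProw i) (hsum i)
      (fun j => by linarith [hV1 j]) hVmono hVk hg hik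
    rw [le_div_iff₀ hVk] at h
    nlinarith [hdrift i, le_max_left (2 * (δ + L)) 1, hV1 i]
  · have h := abs_tsum_mul_le_of_abs_le_one (hProw i) (hP0 i) hg
    simp only [truncAug_of_not_le hik, zero_mul, tsum_zero, zero_sub, abs_neg, hPstoch i] at h ⊢
    nlinarith [hVmono (not_le.1 hik).le, le_max_right (2 * (δ + L)) 1, hV1 i]


lemma abs_tsum_mul_truncAug_sub_le {π : ℕ → ℝ} {δ L : ℝ}
    (hL : 0 ≤ L) (hP0 : ∀ i j, 0 ≤ P i j) (hProw : ∀ i, Summable (P i))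
    (hPstoch : ∀ i, ∑' j, P i j = 1) (hV1 : ∀ n, 1 ≤ V n) (hVmono : Monotone V)
    (hsum : ∀ i, Summable fun j => P i j * V j) (hdrift : ∀ i, ∑' j, P i j * V j ≤ δ * V i + L)
    (hπ0 : ∀ i, 0 ≤ π i) (hπ : Summable π) (hπV : Summable fun j => π j * V j)
    (hπinv : ∀ j, ∑' i, π i * P i j = π j) (hg : ∀ j, |g j| ≤ 1) :
    |∑' i, π i * (∑' j, truncAug P k i j * g j) - ∑' j, π j * g j|
      ≤ max (2 * (δ + L)) 1 / V k * ∑' j, π j * V j := by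
  rw [← tsum_mul_tsum_kernel_eq_of_invariant_of_abs_le_one hπ0 hπ hP0 hProw hPstoch hπinv hg,
    ← (hπ.mul_of_abs_le_one hπ0 (abs_tsum_truncAug_mul_le_one hP0 hProw hPstoch hg)).tsum_sub
      (hπ.mul_of_abs_le_one hπ0 fun i => abs_tsum_mul_le_of_abs_le_one (hProw i) (hP0 i) hg
        |>.trans_eq (hPstoch i)),
    ← tsum_mul_left]
  refine abs_tsum_le_of_abs_le (hπV.mul_left _) fun i => ?_
  rw [← mul_sub, abs_mul, abs_of_nonneg (hπ0 i)]
  calc π i * |∑' j, truncAug P k i j * g j - ∑' j, P i j * g j|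
      ≤ π i * (max (2 * (δ + L)) 1 * V i / V k) :=
        mul_le_mul_of_nonneg_left
          (abs_tsum_truncAug_mul_sub_le hL hP0 hProw hPstoch hV1 hVmono hsum hdrift hg i) (hπ0 i)
    _ = max (2 * (δ + L)) 1 / V k * (π i * V i) := by ring

lemma abs_tsum_mul_pow_apply_sub_le {π f : ℕ → ℝ} {δ L : ℝ} (hL : 0 ≤ L)
    (hP0 : ∀ i j, 0 ≤ P i j) (hProw : ∀ i, Summable (P i)) (hPstoch : ∀ i, ∑' j, P i j = 1)
    (hV1 : ∀ n, 1 ≤ V n) (hVmono : Monotone V) (hsum : ∀ i, Summable fun j => P i j * V j)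
    (hdrift : ∀ i, ∑' j, P i j * V j ≤ δ * V i + L) (hπ0 : ∀ i, 0 ≤ π i) (hπ : Summable π)
    (hπV : Summable fun j => π j * V j) (hπinv : ∀ j, ∑' i, π i * P i j = π j)
    {T : Module.End ℝ (ℕ → ℝ)} (hT : ∀ f : ℕ → ℝ, ∀ i, T f i = ∑' j, truncAug P k i j * f j)
    (hf : ∀ j, |f j| ≤ 1) (n : ℕ) :
    |∑' i, π i * (T ^ n) f i - ∑' j, π j * f j|
      ≤ n * (max (2 * (δ + L)) 1 / V k * ∑' j, π j * V j) := by
  have hmaps : Set.MapsTo T {g | ∀ j, |g j| ≤ 1} {g | ∀ j, |g j| ≤ 1} := fun g hg i => by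
    rw [hT]
    exact abs_tsum_truncAug_mul_le_one hP0 hProw hPstoch hg i
  rw [Module.End.pow_apply]
  refine abs_iterate_sub_le hmaps (Φ := fun g => ∑' i, π i * g i) (fun g hg => ?_) n hf
  simp only [hT]
  exact abs_tsum_mul_truncAug_sub_le hL hP0 hProw hPstoch hV1 hVmono hsum hdrift hπ0 hπ hπV
    hπinv hg

end Perturbation

lemma tsum_ite_lt_le_tsum_mul_div {π V : ℕ → ℝ} {k : ℕ} (hπ0 : ∀ j, 0 ≤ π j) (hπ : Summable π)
    (hπV : Summable fun j => π j * V j) (hV0 : ∀ j, 0 ≤ V j) (hVmono : Monotone V)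
    (hVk : 0 < V k) :
    ∑' j, (if k < j then π j else 0) ≤ (∑' j, π j * V j) / V k := by
  have hle j : (if k < j then π j else 0) ≤ π j * V j / V k := by
    split_ifs with hkj
    · rw [le_div_iff₀ hVk]
      exact mul_le_mul_of_nonneg_left (hVmono hkj.le) (hπ0 j)
    · exact div_nonneg (mul_nonneg (hπ0 j) (hV0 j)) hVk.le
  rw [← tsum_div_const]
  exact (hπ.of_nonneg_of_le (fun j => by split_ifs <;> simp [hπ0]) fun j => by
    split_ifs <;> simp [hπ0]).tsum_le_tsum hle (hπV.div_const _)

lemma abs_sub_tsum_mul_le_of_abs_sub_ite_le {π V h : ℕ → ℝ} {c ε : ℝ} {k : ℕ}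
    (hπ0 : ∀ j, 0 ≤ π j) (hπ1 : ∑' j, π j = 1) (hπV : Summable fun j => π j * V j)
    (hc : |c| ≤ 1) (hh : ∀ i, |h i - c * (if i ≤ k then 1 else 0)| ≤ ε * V i) :
    |c - ∑' i, π i * h i| ≤ (∑' j, if k < j then π j else 0) + ε * ∑' j, π j * V j := by
  have hπ := summable_of_tsum_eq_one hπ1
  have hbound i : |π i * (h i - c * (if i ≤ k then 1 else 0))| ≤ ε * (π i * V i) := by
    rw [abs_mul, abs_of_nonneg (hπ0 i)]
    exact (mul_le_mul_of_nonneg_left (hh i) (hπ0 i)).trans_eq (by ring)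
  have hclose : Summable fun i => π i * (h i - c * (if i ≤ k then 1 else 0)) :=
    (hπV.mul_left ε).of_norm_bounded hbound
  have htail : Summable fun j => if k < j then π j else 0 :=
    hπ.of_nonneg_of_le (fun j => by split_ifs <;> simp [hπ0]) fun j => by
      split_ifs <;> simp [hπ0]
  have hsplit : ∑' i, π i * h i = ∑' i, π i * (h i - c * (if i ≤ k then 1 else 0))
      + c * (1 - ∑' j, if k < j then π j else 0) := by
    have hpt i : π i * h i = π i * (h i - c * (if i ≤ k then 1 else 0))
        + c * (π i - if k < i then π i else 0) := by
      by_cases hik : i ≤ k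
      · simp only [hik, not_lt.2 hik, if_true, if_false]; ring
      · simp only [hik, not_le.1 hik, if_true, if_false]; ring
    rw [tsum_congr hpt, hclose.tsum_add ((hπ.sub htail).mul_left c), tsum_mul_left,
      hπ.tsum_sub htail, hπ1]
  have hT0 : 0 ≤ ∑' j, if k < j then π j else 0 := tsum_nonneg fun j => by split_ifs <;> simp [hπ0]
  have hD : |∑' i, π i * (h i - c * (if i ≤ k then 1 else 0))| ≤ ε * ∑' j, π j * V j := by
    rw [← tsum_mul_left]
    exact abs_tsum_le_of_abs_le (hπV.mul_left ε) hbound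
  rw [hsplit]
  calc |c - (∑' i, π i * (h i - c * (if i ≤ k then 1 else 0))
        + c * (1 - ∑' j, if k < j then π j else 0))|
      = |c * (∑' j, if k < j then π j else 0)
          - ∑' i, π i * (h i - c * (if i ≤ k then 1 else 0))| := by ring_nf
    _ ≤ |c| * (∑' j, if k < j then π j else 0)
          + |∑' i, π i * (h i - c * (if i ≤ k then 1 else 0))| := by
        rw [← abs_of_nonneg hT0, ← abs_mul, abs_of_nonneg hT0]; exact abs_sub _ _
    _ ≤ (∑' j, if k < j then π j else 0) + ε * ∑' j, π j * V j := by
        gcongr; exact mul_le_of_le_one_left hT0 hc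

lemma exists_pow_le_inv_of_log_div_log_inv {ρ x : ℝ} (hρ0 : 0 < ρ) (hρ1 : ρ < 1) (hx : 1 ≤ x) :
    ∃ n : ℕ, ρ ^ n ≤ x⁻¹ ∧ (n : ℝ) ≤ Real.log x / Real.log ρ⁻¹ + 1 := by
  have hlogρ : 0 < Real.log ρ⁻¹ := Real.log_pos ((one_lt_inv₀ hρ0).2 hρ1)
  have hq : 0 ≤ Real.log x / Real.log ρ⁻¹ := div_nonneg (Real.log_nonneg hx) hlogρ.le
  refine ⟨⌈Real.log x / Real.log ρ⁻¹⌉₊, ?_, (Nat.ceil_lt_add_one hq).le⟩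
  have hxpow : x ≤ ρ⁻¹ ^ ⌈Real.log x / Real.log ρ⁻¹⌉₊ := by
    rw [Real.le_pow_iff_log_le (by linarith) (by positivity), ← div_le_iff₀ hlogρ]
    exact Nat.le_ceil _
  rw [inv_pow] at hxpow
  exact (le_inv_comm₀ (by linarith) (by positivity)).1 hxpow

lemma one_add_add_mul_le {C K ρ A x : ℝ} (hC : 1 ≤ C) (hK : 1 ≤ K) (hρ0 : 0 < ρ) (hρ1 : ρ ≤ 1)
    (hA : 1 ≤ A) (hx : 0 ≤ x) : 1 + C + (x + 1) * K ≤ 1 + 2 * K * C / ρ + A * K * x := by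
  have hCK : C + K ≤ 2 * K * C := by nlinarith
  have hρ : 2 * K * C ≤ 2 * K * C / ρ := le_div_self (by positivity) hρ0 hρ1
  have hAK : K * x ≤ A * K * x := by nlinarith [mul_nonneg (by linarith : (0:ℝ) ≤ K) hx]
  linarith

lemma one_le_of_abs_pow_apply_sub_le {T : Module.End ℝ (ℕ → ℝ)} {μ V : ℕ → ℝ} {C ρ : ℝ} {k : ℕ}
    (hV1 : ∀ n, 1 ≤ V n)
    (hT : ∀ (n : ℕ) (f : ℕ → ℝ), (∀ j, |f j| ≤ V j) →
      ∀ i, |(T ^ n) f i - (∑' j, μ j * f j) * (if i ≤ k then (1 : ℝ) else 0)| ≤ C * ρ ^ n * V i) :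
    1 ≤ C := by
  have hV0 j : 0 ≤ V j := by linarith [hV1 j]
  have h := hT 0 V (fun j => (abs_of_nonneg (hV0 j)).le) (k + 1)
  simp only [pow_zero, Module.End.one_apply, if_neg (Nat.not_succ_le_self k), mul_zero,
    sub_zero, mul_one, abs_of_nonneg (hV0 _)] at h
  exact le_of_mul_le_mul_right (by rwa [one_mul]) (by linarith [hV1 (k + 1)])

theorem truncation_tv_bound_discrete_general
    (P : ℕ → ℕ → ℝ)
    (hPnonneg : ∀ i j, 0 ≤ P i j)
    (hProw : ∀ i, Summable (P i))
    (hPstoch : ∀ i, ∑' j, P i j = 1)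
    (V : ℕ → ℝ) (hV1 : ∀ n, 1 ≤ V n) (hVmono : Monotone V)
    (δ L : ℝ) (hδ1 : δ < 1) (hL : 0 < L)
    (hsum : ∀ i, Summable (fun j => P i j * V j))
    (hdrift : ∀ i, ∑' j, P i j * V j ≤ δ * V i + L)
    -- π : the P-invariant probability measure, with π(V) < ∞
    (π : ℕ → ℝ) (hπnonneg : ∀ j, 0 ≤ π j) (hπ1 : ∑' j, π j = 1)
    (hπV : Summable (fun j => π j * V j))
    (hπinv : ∀ j, ∑' i, π i * P i j = π j)
    (k : ℕ)
    -- π̂ₖ : the extension of the Pₖ-invariant probability measure, supported on {0,…,k}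
    (πk : ℕ → ℝ) (hπknonneg : ∀ j, 0 ≤ πk j) (hπk1 : ∑' j, πk j = 1)
    -- V-geometric ergodicity of P̂ₖ with rate ρₖ and constant Cₖ (φₖ = 1_{Bₖ})
    (Phatop : Module.End ℝ (ℕ → ℝ))
    (hPhatop : ∀ f : ℕ → ℝ, ∀ i, Phatop f i = ∑' j, truncAug P k i j * f j)
    (ρk Ck : ℝ) (hρk0 : 0 < ρk) (hρk1 : ρk < 1)
    (hgeo : ∀ (n : ℕ) (f : ℕ → ℝ), (∀ j, |f j| ≤ V j) →
      ∀ i, |(Phatop ^ n) f i - (∑' j, πk j * f j) * (if i ≤ k then (1 : ℝ) else 0)|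
        ≤ Ck * ρk ^ n * V i) :
    (∑' j, (if k < j then π j else 0)) ≤ (∑' j, π j * V j) / V k ∧
    (∑' j, π j * V j) / V k ≤ L / ((1 - δ) * V k) ∧
    (∀ f : ℕ → ℝ, (∀ j, |f j| ≤ 1) →
      |(∑' j, πk j * f j) - ∑' j, π j * f j| ≤
        L / (1 - δ) *
          (1 + 2 * max (2 * (δ + L)) 1 * Ck / ρk +
            (1 + L / (1 - δ)) * max (2 * (δ + L)) 1 * Real.log (V k) / Real.log ρk⁻¹)
          / V k) := by
  have hπ := summable_of_tsum_eq_one hπ1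
  have hVnonneg j : 0 ≤ V j := by linarith [hV1 j]
  have hVk0 : 0 < V k := by linarith [hV1 k]
  have hmoment := tsum_mul_le_div_one_sub_of_drift hδ1 hπnonneg hπ1 hPnonneg hVnonneg hsum
    hdrift hπV hπinv
  have htail := tsum_ite_lt_le_tsum_mul_div hπnonneg hπ hπV hVnonneg hVmono hVk0
  refine ⟨htail, by rw [← div_div]; gcongr, fun f hf => ?_⟩
  have hCk1 := one_le_of_abs_pow_apply_sub_le hV1 hgeo
  obtain ⟨n, hρn, hn⟩ := exists_pow_le_inv_of_log_div_log_inv hρk0 hρk1 (hV1 k)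
  have hergodic := abs_sub_tsum_mul_le_of_abs_sub_ite_le hπnonneg hπ1 hπV
    ((abs_tsum_mul_le_of_abs_le_one (summable_of_tsum_eq_one hπk1) hπknonneg hf).trans_eq hπk1)
    (hgeo n f fun j => (hf j).trans (hV1 j))
  have hperturb := abs_tsum_mul_pow_apply_sub_le hL.le hPnonneg hProw hPstoch hV1 hVmono hsum
    hdrift hπnonneg hπ hπV hπinv hPhatop hf n
  have hX0 : 0 ≤ ∑' j, π j * V j := tsum_nonneg fun j => mul_nonneg (hπnonneg j) (hVnonneg j)
  have hlog : 0 ≤ Real.log (V k) / Real.log ρk⁻¹ :=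
    div_nonneg (Real.log_nonneg (hV1 k)) (Real.log_nonneg (one_le_inv₀ hρk0 |>.2 hρk1.le))
  calc |∑' j, πk j * f j - ∑' j, π j * f j|
      ≤ |∑' j, πk j * f j - ∑' i, π i * (Phatop ^ n) f i|
        + |∑' i, π i * (Phatop ^ n) f i - ∑' j, π j * f j| := abs_sub_le _ _ _
    _ ≤ (∑' j, if k < j then π j else 0) + Ck * ρk ^ n * ∑' j, π j * V j
        + n * (max (2 * (δ + L)) 1 / V k * ∑' j, π j * V j) := add_le_add hergodic hperturb
    _ ≤ L / (1 - δ) / V k + Ck * (V k)⁻¹ * (L / (1 - δ))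
        + (Real.log (V k) / Real.log ρk⁻¹ + 1) * (max (2 * (δ + L)) 1 / V k * (L / (1 - δ))) := by
      gcongr
      exact htail.trans (by gcongr)
    _ = L / (1 - δ) * (1 + Ck + (Real.log (V k) / Real.log ρk⁻¹ + 1) * max (2 * (δ + L)) 1)
        / V k := by ring
    _ ≤ _ := by
      gcongr L / (1 - δ) * ?_ / V k
      have hA : 1 ≤ 1 + L / (1 - δ) := le_add_of_nonneg_right (div_nonneg hL.le (by linarith))
      refine (one_add_add_mul_le hCk1 (le_max_right _ 1) hρk0 hρk1.le hA hlog).trans_eq ?_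
      ring

theorem truncation_tv_bound_discrete
    (P : ℕ → ℕ → ℝ)
    (hPnonneg : ∀ i j, 0 ≤ P i j)
    (hProw : ∀ i, Summable (P i))
    (hPstoch : ∀ i, ∑' j, P i j = 1)
    (V : ℕ → ℝ) (hV1 : ∀ n, 1 ≤ V n) (hV0 : V 0 = 1) (hVmono : Monotone V)
    (hVtop : Filter.Tendsto V Filter.atTop Filter.atTop)
    (δ L : ℝ) (hδ0 : 0 < δ) (hδ1 : δ < 1) (hL : 0 < L)
    (hsum : ∀ i, Summable (fun j => P i j * V j))
    (hdrift : ∀ i, ∑' j, P i j * V j ≤ δ * V i + L)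
    -- π : the P-invariant probability measure, with π(V) < ∞
    (π : ℕ → ℝ) (hπnonneg : ∀ j, 0 ≤ π j) (hπ1 : ∑' j, π j = 1)
    (hπV : Summable (fun j => π j * V j))
    (hπinv : ∀ j, ∑' i, π i * P i j = π j)
    (k : ℕ) (hk : 1 ≤ k)
    -- π̂ₖ : the extension of the Pₖ-invariant probability measure, supported on {0,…,k}
    (πk : ℕ → ℝ) (hπknonneg : ∀ j, 0 ≤ πk j) (hπk1 : ∑' j, πk j = 1)
    (hπksupp : ∀ j, k < j → πk j = 0)
    (hπkinv : ∀ j, ∑' i, πk i * truncAug P k i j = πk j)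
    -- V-geometric ergodicity of P̂ₖ with rate ρₖ and constant Cₖ (φₖ = 1_{Bₖ})
    (Phatop : Module.End ℝ (ℕ → ℝ))
    (hPhatop : ∀ f : ℕ → ℝ, ∀ i, Phatop f i = ∑' j, truncAug P k i j * f j)
    (ρk Ck : ℝ) (hρk0 : 0 < ρk) (hρk1 : ρk < 1) (hCk : 0 < Ck)
    (hgeo : ∀ (n : ℕ) (f : ℕ → ℝ), (∀ j, |f j| ≤ V j) →
      ∀ i, |(Phatop ^ n) f i - (∑' j, πk j * f j) * (if i ≤ k then (1 : ℝ) else 0)|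
        ≤ Ck * ρk ^ n * V i)
    -- V(k) ≥ K so that |ln Δₖ| ≤ ln V(k)
    (hVk : max (2 * (δ + L)) 1 ≤ V k) :
    (∑' j, (if k < j then π j else 0)) ≤ (∑' j, π j * V j) / V k ∧
    (∑' j, π j * V j) / V k ≤ L / ((1 - δ) * V k) ∧
    (∀ f : ℕ → ℝ, (∀ j, |f j| ≤ 1) →
      |(∑' j, πk j * f j) - ∑' j, π j * f j| ≤
        L / (1 - δ) *
          (1 + 2 * max (2 * (δ + L)) 1 * Ck / ρk +
            (1 + L / (1 - δ)) * max (2 * (δ + L)) 1 * Real.log (V k) / Real.log ρk⁻¹)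
          / V k) :=
  truncation_tv_bound_discrete_general P hPnonneg hProw hPstoch V hV1 hVmono δ L hδ1 hL hsum hdrift
    π hπnonneg hπ1 hπV hπinv k πk hπknonneg hπk1 Phatop hPhatop ρk Ck hρk0 hρk1 hgeo
end
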